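/- arXiv:2106.02915 — 4 statements merged into one kernel-verified Lean document; each statement's English description precedes it below -/
import Mathlib

section
/- Let σ : {0,1,…,m−1} → {1,2,…,m} be a bijection with CISS(σ) = (c_1, i_1, …, c_l, i_l), and set c := e_{m−c_1}^T ⊗ C if c_1 > 0 and c := e_m^T ⊗ C if c_1 = 0. Then the higher order system is observable if and only if the linearized system is observable; that is, the (n+r)×n stacked matrix [P(λ); C] has rank n for every λ ∈ ℂ if and only if the (nm+r)×nm stacked matrix [L_σ(λ); c] has rank nm for every λ ∈ ℂ. -/
open Matrix
open Fin.NatCast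

noncomputable section

/-- The matrix polynomial `P(λ) = A_0 + λ A_1 + ⋯ + λ^m A_m` evaluated at `lam`. -/
def PEval (m n : ℕ) (A : Fin (m + 1) → Matrix (Fin n) (Fin n) ℂ) (lam : ℂ) :
    Matrix (Fin n) (Fin n) ℂ :=
  ∑ j : Fin (m + 1), lam ^ (j : ℕ) • A j

/-- `P` is regular: `det P(λ)` is not identically zero. -/
def Regular (m n : ℕ) (A : Fin (m + 1) → Matrix (Fin n) (Fin n) ℂ) : Prop :=
  ∃ lam : ℂ, (PEval m n A lam).det ≠ 0

/-- The Fiedler matrix `M_i` of `P`, an `nm × nm` matrix indexed blockwise by `Fin m × Fin n`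
(block row `0` is the top block row). -/
def FM (m n : ℕ) (A : Fin (m + 1) → Matrix (Fin n) (Fin n) ℂ) (i : ℕ) :
    Matrix (Fin m × Fin n) (Fin m × Fin n) ℂ :=
  Matrix.of fun p q =>
    (if i = 0 then
      if p.1 = q.1 then
        (if (p.1 : ℕ) = m - 1 then -A 0 else (1 : Matrix (Fin n) (Fin n) ℂ)) else 0
    else if i = m then
      if p.1 = q.1 then (if (p.1 : ℕ) = 0 then A (m : Fin (m + 1)) else 1) else 0
    else
      if (p.1 : ℕ) = m - i - 1 ∧ (q.1 : ℕ) = m - i - 1 then -A (i : Fin (m + 1))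
      else if (p.1 : ℕ) = m - i - 1 ∧ (q.1 : ℕ) = m - i then 1
      else if (p.1 : ℕ) = m - i ∧ (q.1 : ℕ) = m - i - 1 then 1
      else if (p.1 : ℕ) = m - i ∧ (q.1 : ℕ) = m - i then 0
      else if p.1 = q.1 then 1 else 0) p.2 q.2

/-- `e_j ⊗ B` (with `j` 1-indexed): the `nm × r` block column matrix with `B` in block row `j`. -/
def eB (m n r : ℕ) (j : ℕ) (B : Matrix (Fin n) (Fin r) ℂ) :
    Matrix (Fin m × Fin n) (Fin r) ℂ :=
  Matrix.of fun p q => if (p.1 : ℕ) + 1 = j then B p.2 q else 0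

/-- `e_j^T ⊗ C` (with `j` 1-indexed): the `r × nm` block row matrix with `C` in block column `j`. -/
def eC (m n r : ℕ) (j : ℕ) (C : Matrix (Fin r) (Fin n) ℂ) :
    Matrix (Fin r) (Fin m × Fin n) ℂ :=
  Matrix.of fun q p => if (p.1 : ℕ) + 1 = j then C q p.2 else 0

/-- `M_σ = M_{σ⁻¹(1)} M_{σ⁻¹(2)} ⋯ M_{σ⁻¹(m)}` (here positions are 0-indexed: `σ i` is the
0-indexed position of the factor `M_i`). -/
def Mperm (m n : ℕ) (A : Fin (m + 1) → Matrix (Fin n) (Fin n) ℂ) (σ : Equiv.Perm (Fin m)) :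
    Matrix (Fin m × Fin n) (Fin m × Fin n) ℂ :=
  (List.ofFn fun j : Fin m => FM m n A ((σ.symm j : Fin m) : ℕ)).prod

/-- The Fiedler pencil `L_σ(λ) = λ M_m − M_σ` of `P` evaluated at `lam`. -/
def LP (m n : ℕ) (A : Fin (m + 1) → Matrix (Fin n) (Fin n) ℂ) (σ : Equiv.Perm (Fin m))
    (lam : ℂ) : Matrix (Fin m × Fin n) (Fin m × Fin n) ℂ :=
  lam • FM m n A m - Mperm m n A σ

/-- `σ` has a consecution at `d` (i.e. `σ(d) < σ(d+1)`). -/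
def ConsAt (m : ℕ) (σ : Equiv.Perm (Fin m)) (d : ℕ) : Prop :=
  ∃ h : d + 1 < m, (σ ⟨d, Nat.lt_of_succ_lt h⟩ : ℕ) < (σ ⟨d + 1, h⟩ : ℕ)

/-- `σ` has an inversion at `d` (i.e. `σ(d) > σ(d+1)`). -/
def InvAt (m : ℕ) (σ : Equiv.Perm (Fin m)) (d : ℕ) : Prop :=
  ∃ h : d + 1 < m, (σ ⟨d + 1, h⟩ : ℕ) < (σ ⟨d, Nat.lt_of_succ_lt h⟩ : ℕ)

/-- `c1` is the number of initial consecutive consecutions of `σ` (the first entry of CISS(σ)). -/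
def IsC1 (m : ℕ) (σ : Equiv.Perm (Fin m)) (c1 : ℕ) : Prop :=
  (∀ d < c1, ConsAt m σ d) ∧ ¬ ConsAt m σ c1

/-- `i1` is the number of consecutive inversions of `σ` at `c1, …, c1 + i1 − 1`
(the second entry of CISS(σ)). -/
def IsI1 (m : ℕ) (σ : Equiv.Perm (Fin m)) (c1 i1 : ℕ) : Prop :=
  (∀ d, c1 ≤ d → d < c1 + i1 → InvAt m σ d) ∧ ¬ InvAt m σ (c1 + i1)

/-- The system matrix `S(λ) = [[−P(λ), B], [C, D]]` evaluated at `lam`. -/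
def SMat (m n r : ℕ) (A : Fin (m + 1) → Matrix (Fin n) (Fin n) ℂ)
    (B : Matrix (Fin n) (Fin r) ℂ) (C : Matrix (Fin r) (Fin n) ℂ) (D : Matrix (Fin r) (Fin r) ℂ)
    (lam : ℂ) : Matrix (Fin n ⊕ Fin r) (Fin n ⊕ Fin r) ℂ :=
  Matrix.fromBlocks (-(PEval m n A lam)) B C D

/-- The Fiedler pencil `𝕊_σ(λ)` of the system matrix, evaluated at `lam`:
`[[−L_σ(λ), e_m ⊗ B], [e_{m−c1}^T ⊗ C, D]]` if `c1 > 0`, and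
`[[−L_σ(λ), e_{m−i1} ⊗ B], [e_m^T ⊗ C, D]]` if `c1 = 0`. -/
def SP (m n r : ℕ) (A : Fin (m + 1) → Matrix (Fin n) (Fin n) ℂ)
    (B : Matrix (Fin n) (Fin r) ℂ) (C : Matrix (Fin r) (Fin n) ℂ) (D : Matrix (Fin r) (Fin r) ℂ)
    (σ : Equiv.Perm (Fin m)) (c1 i1 : ℕ) (lam : ℂ) :
    Matrix ((Fin m × Fin n) ⊕ Fin r) ((Fin m × Fin n) ⊕ Fin r) ℂ :=
  if 0 < c1 then
    Matrix.fromBlocks (-(LP m n A σ lam)) (eB m n r m B) (eC m n r (m - c1) C) D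
  else
    Matrix.fromBlocks (-(LP m n A σ lam)) (eB m n r (m - i1) B) (eC m n r m C) D

/-- The Fiedler matrices `𝕄_i` of the system matrix `S(λ)`. -/
def SFM (m n r : ℕ) (A : Fin (m + 1) → Matrix (Fin n) (Fin n) ℂ)
    (B : Matrix (Fin n) (Fin r) ℂ) (C : Matrix (Fin r) (Fin n) ℂ) (D : Matrix (Fin r) (Fin r) ℂ)
    (i : ℕ) : Matrix ((Fin m × Fin n) ⊕ Fin r) ((Fin m × Fin n) ⊕ Fin r) ℂ :=
  if i = 0 then Matrix.fromBlocks (FM m n A 0) (-(eB m n r m B)) (-(eC m n r m C)) (-D)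
  else if i = m then Matrix.fromBlocks (FM m n A m) 0 0 0
  else Matrix.fromBlocks (FM m n A i) 0 0 1

/-- `w = (w0, w1)` is a proper permutation of `{0, 1, …, m}`. -/
def ProperPerm (m : ℕ) (w0 w1 : List ℕ) : Prop :=
  List.Perm (w0 ++ w1) (List.range (m + 1)) ∧ 0 ∈ w0 ∧ m ∈ w1

/-- `M̂_{w0}`: the product of the Fiedler matrices of `P` in the order listed in `w0`. -/
def hatM0 (m n : ℕ) (A : Fin (m + 1) → Matrix (Fin n) (Fin n) ℂ) (w0 : List ℕ) :
    Matrix (Fin m × Fin n) (Fin m × Fin n) ℂ :=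
  (w0.map (FM m n A)).prod

/-- `M̂_{w1} = M_{i1}⁻¹ ⋯ M_{ip}⁻¹ M_m M_{j1}⁻¹ ⋯ M_{jq}⁻¹` for `w1 = (i1,…,ip,m,j1,…,jq)`. -/
def hatM1 (m n : ℕ) (A : Fin (m + 1) → Matrix (Fin n) (Fin n) ℂ) (w1 : List ℕ) :
    Matrix (Fin m × Fin n) (Fin m × Fin n) ℂ :=
  (w1.map (fun i => if i = m then FM m n A m else (FM m n A i)⁻¹)).prod

/-- The PGF pencil `K_w(λ) = λ M̂_{w1} − M̂_{w0}` of `P`, evaluated at `lam`. -/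
def KP (m n : ℕ) (A : Fin (m + 1) → Matrix (Fin n) (Fin n) ℂ) (w0 w1 : List ℕ) (lam : ℂ) :
    Matrix (Fin m × Fin n) (Fin m × Fin n) ℂ :=
  lam • hatM1 m n A w1 - hatM0 m n A w0

/-- `𝕄̂_{w0}` for the system Fiedler matrices. -/
def hatS0 (m n r : ℕ) (A : Fin (m + 1) → Matrix (Fin n) (Fin n) ℂ)
    (B : Matrix (Fin n) (Fin r) ℂ) (C : Matrix (Fin r) (Fin n) ℂ) (D : Matrix (Fin r) (Fin r) ℂ)
    (w0 : List ℕ) : Matrix ((Fin m × Fin n) ⊕ Fin r) ((Fin m × Fin n) ⊕ Fin r) ℂ :=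
  (w0.map (SFM m n r A B C D)).prod

/-- `𝕄̂_{w1}` for the system Fiedler matrices. -/
def hatS1 (m n r : ℕ) (A : Fin (m + 1) → Matrix (Fin n) (Fin n) ℂ)
    (B : Matrix (Fin n) (Fin r) ℂ) (C : Matrix (Fin r) (Fin n) ℂ) (D : Matrix (Fin r) (Fin r) ℂ)
    (w1 : List ℕ) : Matrix ((Fin m × Fin n) ⊕ Fin r) ((Fin m × Fin n) ⊕ Fin r) ℂ :=
  (w1.map (fun i => if i = m then SFM m n r A B C D m else (SFM m n r A B C D i)⁻¹)).prod

/-- The PGF pencil `𝕂_w(λ) = λ 𝕄̂_{w1} − 𝕄̂_{w0}` of `G`, evaluated at `lam`. -/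
def SKP (m n r : ℕ) (A : Fin (m + 1) → Matrix (Fin n) (Fin n) ℂ)
    (B : Matrix (Fin n) (Fin r) ℂ) (C : Matrix (Fin r) (Fin n) ℂ) (D : Matrix (Fin r) (Fin r) ℂ)
    (w0 w1 : List ℕ) (lam : ℂ) :
    Matrix ((Fin m × Fin n) ⊕ Fin r) ((Fin m × Fin n) ⊕ Fin r) ℂ :=
  lam • hatS1 m n r A B C D w1 - hatS0 m n r A B C D w0

/-- The index tuple `w` has a consecution at `d`. -/
def LCons (w : List ℕ) (d : ℕ) : Prop :=
  d ∈ w ∧ d + 1 ∈ w ∧ w.idxOf d < w.idxOf (d + 1)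

/-- The index tuple `w` has an inversion at `d`. -/
def LInv (w : List ℕ) (d : ℕ) : Prop :=
  d ∈ w ∧ d + 1 ∈ w ∧ w.idxOf (d + 1) < w.idxOf d

/-- `CIP(w) = (c0, i0)`. -/
def IsCIP (w : List ℕ) (c0 i0 : ℕ) : Prop :=
  ((∀ d < c0, LCons w d) ∧ ¬ LCons w c0) ∧ ((∀ d < i0, LInv w d) ∧ ¬ LInv w i0)

/-- Block index of an index of an `(nm+r) × (nm+r)` matrix: the first `m` (diagonal) blocks
have size `n`, the last one size `r`. -/
def sIdx (m n r : ℕ) : (Fin m × Fin n) ⊕ Fin r → ℕ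
  | Sum.inl p => p.1
  | Sum.inr _ => m

/-- An `(nm+r) × (nm+r)` matrix has block bandwidth `k` (e.g. `k = 1`: block tridiagonal,
`k = 2`: block pentadiagonal). -/
def BlockBandS (m n r : ℕ) (k : ℕ)
    (M : Matrix ((Fin m × Fin n) ⊕ Fin r) ((Fin m × Fin n) ⊕ Fin r) ℂ) : Prop :=
  ∀ x y, (sIdx m n r x + k < sIdx m n r y ∨ sIdx m n r y + k < sIdx m n r x) → M x y = 0

/-- An `nm × nm` matrix has block bandwidth `k`. -/
def BlockBandP (m n : ℕ) (k : ℕ) (M : Matrix (Fin m × Fin n) (Fin m × Fin n) ℂ) : Prop :=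
  ∀ x y : Fin m × Fin n, ((x.1 : ℕ) + k < (y.1 : ℕ) ∨ (y.1 : ℕ) + k < (x.1 : ℕ)) → M x y = 0

/-- The degree-`k` Horner shift `P_k(λ) = A_{m−k} + λ A_{m−k+1} + ⋯ + λ^k A_m`. -/
def Horner (m n : ℕ) (A : Fin (m + 1) → Matrix (Fin n) (Fin n) ℂ) (k : Fin (m + 1)) (lam : ℂ) :
    Matrix (Fin n) (Fin n) ℂ :=
  ∑ j : Fin ((k : ℕ) + 1),
    lam ^ (j : ℕ) • A ⟨m - (k : ℕ) + (j : ℕ), by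
      have h1 := j.isLt; have h2 := k.isLt; omega⟩

/-- `N_1`: the zero-degree coefficient of the first companion pencil of `P`. -/
def N1 (m n : ℕ) (A : Fin (m + 1) → Matrix (Fin n) (Fin n) ℂ) :
    Matrix (Fin m × Fin n) (Fin m × Fin n) ℂ :=
  Matrix.of fun p q =>
    (if (p.1 : ℕ) = 0 then -A ((m - 1 - (q.1 : ℕ) : ℕ) : Fin (m + 1))
     else if (p.1 : ℕ) = (q.1 : ℕ) + 1 then (1 : Matrix (Fin n) (Fin n) ℂ)
     else 0) p.2 q.2

/-- `N_2`: the zero-degree coefficient of the second companion pencil of `P`. -/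
def N2 (m n : ℕ) (A : Fin (m + 1) → Matrix (Fin n) (Fin n) ℂ) :
    Matrix (Fin m × Fin n) (Fin m × Fin n) ℂ :=
  Matrix.of fun p q =>
    (if (q.1 : ℕ) = 0 then -A ((m - 1 - (p.1 : ℕ) : ℕ) : Fin (m + 1))
     else if (q.1 : ℕ) = (p.1 : ℕ) + 1 then (1 : Matrix (Fin n) (Fin n) ℂ)
     else 0) p.2 q.2

/-- The first companion form `C_1(λ) = [[−L_1(λ), e_1 ⊗ B], [e_m^T ⊗ C, D]]` of `S`. -/
def C1P (m n r : ℕ) (A : Fin (m + 1) → Matrix (Fin n) (Fin n) ℂ)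
    (B : Matrix (Fin n) (Fin r) ℂ) (C : Matrix (Fin r) (Fin n) ℂ) (D : Matrix (Fin r) (Fin r) ℂ)
    (lam : ℂ) : Matrix ((Fin m × Fin n) ⊕ Fin r) ((Fin m × Fin n) ⊕ Fin r) ℂ :=
  Matrix.fromBlocks (-(lam • FM m n A m - N1 m n A)) (eB m n r 1 B) (eC m n r m C) D

/-- The second companion form `C_2(λ) = [[−L_2(λ), e_m ⊗ B], [e_1^T ⊗ C, D]]` of `S`. -/
def C2P (m n r : ℕ) (A : Fin (m + 1) → Matrix (Fin n) (Fin n) ℂ)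
    (B : Matrix (Fin n) (Fin r) ℂ) (C : Matrix (Fin r) (Fin n) ℂ) (D : Matrix (Fin r) (Fin r) ℂ)
    (lam : ℂ) : Matrix ((Fin m × Fin n) ⊕ Fin r) ((Fin m × Fin n) ⊕ Fin r) ℂ :=
  Matrix.fromBlocks (-(lam • FM m n A m - N2 m n A)) (eB m n r m B) (eC m n r 1 C) D


/-! Both ranks are full exactly when the stacked matrices have trivial kernel. Applying the
factors of `M_σ` to a vector one at a time turns `L_σ(λ) v = 0` into a triangular system of block
equations, whose solutions are exactly the vectors `v = G(λ) x` with `P(λ) x = 0`; block `m - c₁`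
of `G(λ)` is the identity, so `c v = C x`, and the two kernels are trivial together. -/

namespace Matrix

theorem rank_eq_card_width_iff {K α γ : Type*} [Field K] [Fintype γ] (M : Matrix α γ K) :
    M.rank = Fintype.card γ ↔ ∀ x, M *ᵥ x = 0 → x = 0 := by
  rw [← Matrix.ker_mulVecLin_eq_bot_iff, ← Submodule.finrank_eq_zero, Matrix.rank]
  have := LinearMap.finrank_range_add_finrank_ker M.mulVecLin
  rw [Module.finrank_fintype_fun_eq_card] at this
  omega

theorem rank_fromRows_eq_card_width_iff {K α β γ : Type*} [Field K] [Fintype γ] (M : Matrix α γ K)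
    (N : Matrix β γ K) :
    (fromRows M N).rank = Fintype.card γ ↔ ∀ x, M *ᵥ x = 0 → N *ᵥ x = 0 → x = 0 := by
  simp [rank_eq_card_width_iff, fromRows_mulVec, ← Sum.elim_zero_zero, Sum.elim_eq_iff, and_imp]

end Matrix

namespace FiedlerPencil

variable {m n : ℕ}

/-- Block `e` of `v`, counted from the bottom: with this indexing the Fiedler factor `M_i` acts on
blocks `i` and `i - 1` only. It is `0` for `e ≥ m`. -/
def revBlock (v : Fin m × Fin n → ℂ) (e : ℕ) : Fin n → ℂ :=
  fun s => if h : e < m then v (⟨m - 1 - e, by omega⟩, s) else 0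

lemma revBlock_of_lt (v : Fin m × Fin n → ℂ) {e : ℕ} (he : e < m) :
    revBlock v e = fun s => v (⟨m - 1 - e, by omega⟩, s) := by
  funext s; simp [revBlock, he]

lemma revBlock_of_le (v : Fin m × Fin n → ℂ) {e : ℕ} (he : m ≤ e) : revBlock v e = 0 := by
  funext s; simp [revBlock, show ¬ e < m by omega]

@[simp] lemma revBlock_zero (e : ℕ) : revBlock (0 : Fin m × Fin n → ℂ) e = 0 := by
  funext s; simp [revBlock]

@[simp] lemma revBlock_sub (v w : Fin m × Fin n → ℂ) (e : ℕ) :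
    revBlock (v - w) e = revBlock v e - revBlock w e := by
  funext s; by_cases he : e < m <;> simp [revBlock, he]

@[simp] lemma revBlock_smul (c : ℂ) (v : Fin m × Fin n → ℂ) (e : ℕ) :
    revBlock (c • v) e = c • revBlock v e := by
  funext s; by_cases he : e < m <;> simp [revBlock, he]

lemma ext_revBlock {v w : Fin m × Fin n → ℂ} (h : ∀ e < m, revBlock v e = revBlock w e) :
    v = w := by
  funext ⟨p, s⟩
  have hp : m - 1 - (m - 1 - (p : ℕ)) = p := by omega
  simpa [revBlock_of_lt _ (show m - 1 - (p : ℕ) < m by omega), hp] using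
    congrFun (h (m - 1 - p) (by omega)) s

lemma eC_mulVec {r : ℕ} (C : Matrix (Fin r) (Fin n) ℂ) (v : Fin m × Fin n → ℂ) (e : ℕ) :
    eC m n r (m - e) C *ᵥ v = C *ᵥ revBlock v e := by
  funext q
  simp only [mulVec, dotProduct, eC, of_apply, ite_mul, zero_mul, Fintype.sum_prod_type]
  by_cases he : e < m
  · rw [Fintype.sum_eq_single ⟨m - 1 - e, by omega⟩ (fun p hp => by
      simp only [ne_eq, Fin.ext_iff] at hp; simp [show ¬ (p : ℕ) + 1 = m - e by omega])]
    simp [revBlock_of_lt _ he, show m - 1 - e + 1 = m - e by omega]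
  · simp [revBlock_of_le _ (not_lt.mp he), show m - e = 0 by omega]

section FiedlerFactors

variable (A : Fin (m + 1) → Matrix (Fin n) (Fin n) ℂ)

def fiedlerBlock (i : ℕ) (p q : Fin m) : Matrix (Fin n) (Fin n) ℂ :=
  if i = 0 then
    if p = q then (if (p : ℕ) = m - 1 then -A 0 else 1) else 0
  else if i = m then
    if p = q then (if (p : ℕ) = 0 then A (m : Fin (m + 1)) else 1) else 0
  else
    if (p : ℕ) = m - i - 1 ∧ (q : ℕ) = m - i - 1 then -A (i : Fin (m + 1))
    else if (p : ℕ) = m - i - 1 ∧ (q : ℕ) = m - i then 1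
    else if (p : ℕ) = m - i ∧ (q : ℕ) = m - i - 1 then 1
    else if (p : ℕ) = m - i ∧ (q : ℕ) = m - i then 0
    else if p = q then 1 else 0

lemma FM_eq_of_fiedlerBlock (i : ℕ) :
    FM m n A i = Matrix.of fun p q => fiedlerBlock A i p.1 q.1 p.2 q.2 := rfl

lemma revBlock_FM_mulVec_eq_sum (i : ℕ) (w : Fin m × Fin n → ℂ) {e : ℕ} (he : e < m) :
    revBlock (FM m n A i *ᵥ w) e
      = ∑ q : Fin m, fiedlerBlock A i ⟨m - 1 - e, by omega⟩ q *ᵥ fun t => w (q, t) := by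
  funext s
  simp [revBlock, he, FM_eq_of_fiedlerBlock, mulVec, dotProduct, Fintype.sum_prod_type,
    Finset.sum_apply]

lemma revBlock_FM_zero_mulVec (w : Fin m × Fin n → ℂ) (e : ℕ) :
    revBlock (FM m n A 0 *ᵥ w) e = if e = 0 then -A 0 *ᵥ revBlock w 0 else revBlock w e := by
  by_cases he : e < m
  · rw [revBlock_FM_mulVec_eq_sum A 0 w he, Fintype.sum_eq_single ⟨m - 1 - e, by omega⟩
      (fun q hq => by simp [fiedlerBlock, Ne.symm hq])]
    by_cases he0 : e = 0
    · subst he0; simp [fiedlerBlock, revBlock_of_lt _ he]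
    · simp [fiedlerBlock, revBlock_of_lt _ he, he0, show m - 1 - e ≠ m - 1 by omega]
  · rw [revBlock_of_le _ (not_lt.mp he), revBlock_of_le w (not_lt.mp he)]
    split_ifs with he0
    · simp [revBlock_of_le w (show m ≤ 0 by omega)]
    · rfl

lemma revBlock_FM_mulVec {i : ℕ} (hi0 : i ≠ 0) (hi : i < m) (w : Fin m × Fin n → ℂ) (e : ℕ) :
    revBlock (FM m n A i *ᵥ w) e =
      if e = i then -A i *ᵥ revBlock w i + revBlock w (i - 1)
      else if e + 1 = i then revBlock w i else revBlock w e := by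
  by_cases he : e < m
  swap
  · rw [revBlock_of_le _ (by omega), if_neg (by omega), if_neg (by omega),
      revBlock_of_le _ (by omega)]
  have hsummand : ∀ q : Fin m, fiedlerBlock A i ⟨m - 1 - e, by omega⟩ q
      = if (q : ℕ) = m - 1 - i ∧ e = i then -A i
        else if ((q : ℕ) = m - i ∧ e = i) ∨ ((q : ℕ) = m - 1 - i ∧ e + 1 = i)
          ∨ ((q : ℕ) = m - 1 - e ∧ e ≠ i ∧ e + 1 ≠ i) then 1 else 0 := by
    intro q
    simp only [fiedlerBlock, if_neg hi0, if_neg hi.ne, Fin.ext_iff]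
    split_ifs <;> first | rfl | omega
  simp only [revBlock_FM_mulVec_eq_sum A i w he, hsummand]
  by_cases hei : e = i
  · subst hei
    rw [Fintype.sum_eq_add ⟨m - 1 - e, by omega⟩ ⟨m - e, by omega⟩ (by simp [Fin.ext_iff]; omega)
      (fun q hq => by simp [Fin.ext_iff] at hq; simp [hq.1, hq.2])]
    simp [revBlock_of_lt _ he, revBlock_of_lt _ (show e - 1 < m by omega),
      show m - 1 - (e - 1) = m - e by omega, show m - e ≠ m - 1 - e by omega]
  · by_cases he1 : e + 1 = i
    · subst he1
      rw [Fintype.sum_eq_single ⟨m - 1 - (e + 1), by omega⟩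
        (fun q hq => by simp [Fin.ext_iff] at hq; simp [hq])]
      simp [revBlock_of_lt _ hi]
    · rw [Fintype.sum_eq_single ⟨m - 1 - e, by omega⟩
        (fun q hq => by simp [Fin.ext_iff] at hq; simp [hq, hei, he1])]
      simp [revBlock_of_lt _ he, hei, he1]

lemma revBlock_FM_last_mulVec (w : Fin m × Fin n → ℂ) (e : ℕ) :
    revBlock (FM m n A m *ᵥ w) e
      = if e = m - 1 then A m *ᵥ revBlock w e else revBlock w e := by
  by_cases he : e < m
  · rw [revBlock_FM_mulVec_eq_sum A m w he, Fintype.sum_eq_single ⟨m - 1 - e, by omega⟩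
      (fun q hq => by simp [fiedlerBlock, Ne.symm hq])]
    by_cases hel : e = m - 1
    · subst hel; simp [fiedlerBlock, revBlock_of_lt _ he, show m ≠ 0 by omega]
    · simp [fiedlerBlock, revBlock_of_lt _ he, hel, show m ≠ 0 by omega,
        show m - 1 - e ≠ 0 by omega]
  · simp [revBlock_of_le _ (not_lt.mp he)]

end FiedlerFactors

section Positions

variable (σ : Equiv.Perm (Fin m))

instance (d : ℕ) : Decidable (ConsAt m σ d) := by unfold ConsAt; infer_instance

instance (d : ℕ) : Decidable (InvAt m σ d) := by unfold InvAt; infer_instance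

/-- `σ j` as a natural number (`0` for `j ≥ m`): the position of `M_j` in `M_σ`. -/
def pos (j : ℕ) : ℕ := if h : j < m then σ ⟨j, h⟩ else 0

lemma pos_lt {j : ℕ} (hj : j < m) : pos σ j < m := by
  simp [pos, hj]

lemma pos_injective {j k : ℕ} (hj : j < m) (hk : k < m) (h : pos σ j = pos σ k) : j = k := by
  simp only [pos, hj, hk, dite_true] at h
  simpa using σ.injective (Fin.ext h)

lemma pos_symm_apply (t : Fin m) : pos σ (σ.symm t) = t := by
  simp [pos]

lemma consAt_iff (i : ℕ) : ConsAt m σ i ↔ i + 1 < m ∧ pos σ i < pos σ (i + 1) := by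
  constructor
  · rintro ⟨h, hlt⟩; exact ⟨h, by simpa [pos, h, Nat.lt_of_succ_lt h] using hlt⟩
  · rintro ⟨h, hlt⟩; exact ⟨h, by simpa [pos, h, Nat.lt_of_succ_lt h] using hlt⟩

lemma invAt_iff (i : ℕ) : InvAt m σ i ↔ i + 1 < m ∧ pos σ (i + 1) < pos σ i := by
  constructor
  · rintro ⟨h, hlt⟩; exact ⟨h, by simpa [pos, h, Nat.lt_of_succ_lt h] using hlt⟩
  · rintro ⟨h, hlt⟩; exact ⟨h, by simpa [pos, h, Nat.lt_of_succ_lt h] using hlt⟩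

lemma consAt_or_invAt {i : ℕ} (h : i + 1 < m) : ConsAt m σ i ∨ InvAt m σ i := by
  have := pos_injective σ (j := i) (k := i + 1) (by omega) h
  rw [consAt_iff, invAt_iff]
  omega

lemma not_invAt_of_consAt {i : ℕ} (h : ConsAt m σ i) : ¬ InvAt m σ i := by
  rw [consAt_iff] at h; rw [invAt_iff]; omega

lemma not_consAt_of_invAt {i : ℕ} (h : InvAt m σ i) : ¬ ConsAt m σ i := by
  rw [invAt_iff] at h; rw [consAt_iff]; omega

lemma not_consAt_last : ¬ ConsAt m σ (m - 1) := fun ⟨h, _⟩ => by omega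

lemma not_invAt_last : ¬ InvAt m σ (m - 1) := fun ⟨h, _⟩ => by omega

lemma lt_of_isC1 (hm : 0 < m) {c1 : ℕ} (hc1 : IsC1 m σ c1) : c1 < m := by
  by_contra h
  obtain ⟨h', _⟩ := hc1.1 (m - 1) (by omega)
  omega

end Positions

section Inputs

variable (A : Fin (m + 1) → Matrix (Fin n) (Fin n) ℂ) (σ : Equiv.Perm (Fin m))
  (v : Fin m × Fin n → ℂ)

/-- When `M_σ *ᵥ v` is computed one factor at a time, `M_i` reads blocks `i` and `i - 1`;
`topInput i` and `botInput i` are the values it finds there, and it writes `topOutput i` into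
block `i`. -/
def topInput (i : ℕ) : Fin n → ℂ :=
  if h : ConsAt m σ i then topInput (i + 1) else revBlock v i
termination_by m - i
decreasing_by obtain ⟨h, -⟩ := h; omega

def botInput : ℕ → Fin n → ℂ
  | 0 => 0
  | i + 1 => if InvAt m σ i then -A i *ᵥ topInput σ v i + botInput i else revBlock v i

def topOutput (i : ℕ) : Fin n → ℂ := -A i *ᵥ topInput σ v i + botInput A σ v i

lemma topInput_of_consAt {i : ℕ} (h : ConsAt m σ i) : topInput σ v i = topInput σ v (i + 1) := by
  rw [topInput, dif_pos h]

lemma topInput_of_not_consAt {i : ℕ} (h : ¬ ConsAt m σ i) : topInput σ v i = revBlock v i := by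
  rw [topInput, dif_neg h]

lemma botInput_succ_of_invAt {i : ℕ} (h : InvAt m σ i) :
    botInput A σ v (i + 1) = topOutput A σ v i := by
  rw [botInput, if_pos h, topOutput]

lemma botInput_succ_of_not_invAt {i : ℕ} (h : ¬ InvAt m σ i) :
    botInput A σ v (i + 1) = revBlock v i := by
  rw [botInput, if_neg h]

lemma topInput_zero_of_isC1 {c1 : ℕ} (hc1 : IsC1 m σ c1) : topInput σ v 0 = revBlock v c1 := by
  have hshift : ∀ k ≤ c1, topInput σ v (c1 - k) = topInput σ v c1 := by
    intro k hk
    induction k with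
    | zero => rfl
    | succ k ih =>
      rw [topInput_of_consAt σ v (hc1.1 _ (by omega)), show c1 - (k + 1) + 1 = c1 - k by omega,
        ih (by omega)]
  simpa [topInput_of_not_consAt σ v hc1.2] using hshift c1 le_rfl

end Inputs

section Simulation

variable (A : Fin (m + 1) → Matrix (Fin n) (Fin n) ℂ) (σ : Equiv.Perm (Fin m))
  (v : Fin m × Fin n → ℂ)

def partialProd (t : ℕ) : Matrix (Fin m × Fin n) (Fin m × Fin n) ℂ :=
  ((List.ofFn fun j : Fin m => FM m n A (σ.symm j)).drop t).prod

lemma partialProd_zero : partialProd A σ 0 = Mperm m n A σ := rfl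

lemma partialProd_of_le {t : ℕ} (ht : m ≤ t) : partialProd A σ t = 1 := by
  rw [partialProd, List.drop_eq_nil_of_le (by rw [List.length_ofFn]; exact ht), List.prod_nil]

lemma partialProd_of_lt {t : ℕ} (ht : t < m) :
    partialProd A σ t = FM m n A (σ.symm ⟨t, ht⟩) * partialProd A σ (t + 1) := by
  rw [partialProd, List.drop_eq_getElem_cons (by simpa using ht)]
  simp [partialProd]

/-- The factors applied in `partialProd A σ t *ᵥ v` are the `M_j` with `t ≤ pos σ j`; block `i`
of that vector was last written by `M_(i+1)`, by `M_i`, or not at all. -/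
def stateBlock (t i : ℕ) : Fin n → ℂ :=
  if i + 1 < m ∧ t ≤ pos σ (i + 1) ∧ (pos σ i < t ∨ pos σ (i + 1) < pos σ i) then
    topInput σ v (i + 1)
  else if t ≤ pos σ i then topOutput A σ v i
  else revBlock v i

variable {σ} {i₀ t : ℕ}

lemma stateBlock_succ_self (hi₀ : i₀ < m) (ht : pos σ i₀ = t) :
    stateBlock A σ v (t + 1) i₀ = topInput σ v i₀ := by
  by_cases hc : ConsAt m σ i₀
  · have := (consAt_iff σ i₀).mp hc
    rw [stateBlock, if_pos (by omega), topInput_of_consAt σ v hc]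
  · have hinv : i₀ + 1 < m → pos σ (i₀ + 1) < pos σ i₀ := fun h => by
      have := pos_injective σ (j := i₀) (k := i₀ + 1) hi₀ h
      rw [consAt_iff] at hc
      omega
    rw [stateBlock, if_neg (by omega), if_neg (by omega), topInput_of_not_consAt σ v hc]

lemma stateBlock_succ_pred (hi₀ : i₀ < m) (ht : pos σ i₀ = t) (h0 : i₀ ≠ 0) :
    stateBlock A σ v (t + 1) (i₀ - 1) = botInput A σ v i₀ := by
  obtain ⟨j, rfl⟩ : ∃ j, i₀ = j + 1 := ⟨i₀ - 1, by omega⟩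
  simp only [Nat.add_sub_cancel]
  rw [stateBlock, if_neg (by omega)]
  rcases consAt_or_invAt σ hi₀ with hc | hv
  · have := (consAt_iff σ j).mp hc
    rw [if_neg (by omega), botInput_succ_of_not_invAt A σ v (not_invAt_of_consAt σ hc)]
  · have := (invAt_iff σ j).mp hv
    rw [if_pos (by omega), botInput_succ_of_invAt A σ v hv]

lemma stateBlock_self (ht : pos σ i₀ = t) : stateBlock A σ v t i₀ = topOutput A σ v i₀ := by
  rw [stateBlock, if_neg (by omega), if_pos (by omega)]

lemma stateBlock_pred (hi₀ : i₀ < m) (ht : pos σ i₀ = t) (h0 : i₀ ≠ 0) :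
    stateBlock A σ v t (i₀ - 1) = topInput σ v i₀ := by
  obtain ⟨j, rfl⟩ : ∃ j, i₀ = j + 1 := ⟨i₀ - 1, by omega⟩
  have := pos_injective σ (j := j) (k := j + 1) (by omega) hi₀
  rw [Nat.add_sub_cancel, stateBlock, if_pos (by omega)]

lemma stateBlock_succ_of_ne (hi₀ : i₀ < m) (ht : pos σ i₀ = t) {i : ℕ} (hi : i < m)
    (hne : i ≠ i₀) (hne' : i + 1 ≠ i₀) :
    stateBlock A σ v (t + 1) i = stateBlock A σ v t i := by
  have h1 : pos σ i ≠ t := fun e => hne (pos_injective σ hi hi₀ (by omega))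
  have h2 : i + 1 < m → pos σ (i + 1) ≠ t := fun h e => hne' (pos_injective σ h hi₀ (by omega))
  unfold stateBlock
  congr 1
  · apply propext
    by_cases h : i + 1 < m
    · have := h2 h; omega
    · omega
  · congr 1; apply propext; omega

variable (σ)

lemma revBlock_partialProd_mulVec {t : ℕ} (ht : t ≤ m) :
    ∀ i < m, revBlock (partialProd A σ t *ᵥ v) i = stateBlock A σ v t i := by
  induction ht using Nat.decreasingInduction with
  | self =>
    intro i hi
    rw [partialProd_of_le A σ le_rfl, one_mulVec, stateBlock,
      if_neg fun ⟨h, h', _⟩ => by have := pos_lt σ h; omega,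
      if_neg (by have := pos_lt σ hi; omega)]
  | of_succ t ht ih =>
    intro i hi
    obtain ⟨i₀, hi₀, hpos, hfactor⟩ :
        ∃ i₀ < m, pos σ i₀ = t ∧ ((σ.symm ⟨t, ht⟩ : Fin m) : ℕ) = i₀ :=
      ⟨_, (σ.symm _).isLt, pos_symm_apply σ _, rfl⟩
    rw [partialProd_of_lt A σ ht, ← mulVec_mulVec, hfactor]
    by_cases h0 : i₀ = 0
    · subst h0
      rw [revBlock_FM_zero_mulVec]
      split_ifs with hi0
      · subst hi0
        rw [ih 0 hi, stateBlock_succ_self A v hi hpos, stateBlock_self A v hpos, topOutput,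
          botInput, add_zero, Nat.cast_zero]
      · rw [ih i hi, stateBlock_succ_of_ne A v (by omega) hpos hi hi0 (by omega)]
    · rw [revBlock_FM_mulVec A h0 hi₀]
      split_ifs with he he'
      · subst he
        rw [ih i hi, ih (i - 1) (by omega), stateBlock_succ_self A v hi hpos,
          stateBlock_succ_pred A v hi hpos h0, stateBlock_self A v hpos, topOutput]
      · rw [ih i₀ hi₀, stateBlock_succ_self A v hi₀ hpos, ← stateBlock_pred A v hi₀ hpos h0,
          show i = i₀ - 1 by omega]
      · rw [ih i hi, stateBlock_succ_of_ne A v hi₀ hpos hi he he']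

lemma revBlock_Mperm_mulVec {i : ℕ} (hi : i < m) :
    revBlock (Mperm m n A σ *ᵥ v) i
      = if InvAt m σ i then topInput σ v (i + 1) else topOutput A σ v i := by
  rw [← partialProd_zero, revBlock_partialProd_mulVec A σ v (Nat.zero_le m) i hi, stateBlock]
  by_cases hinv : InvAt m σ i
  · have := (invAt_iff σ i).mp hinv
    rw [if_pos (by omega), if_pos hinv]
  · rw [invAt_iff] at hinv
    rw [if_neg (by omega), if_pos (Nat.zero_le _), if_neg (by rwa [invAt_iff])]

lemma LP_mulVec_eq_zero_iff (lam : ℂ) :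
    LP m n A σ lam *ᵥ v = 0 ↔ ∀ i < m,
      lam • (if i = m - 1 then A m *ᵥ revBlock v i else revBlock v i)
        = if InvAt m σ i then topInput σ v (i + 1) else topOutput A σ v i := by
  have hblock : ∀ i < m, revBlock (LP m n A σ lam *ᵥ v) i
      = lam • (if i = m - 1 then A m *ᵥ revBlock v i else revBlock v i)
        - if InvAt m σ i then topInput σ v (i + 1) else topOutput A σ v i := by
    intro i hi
    rw [LP, sub_mulVec, smul_mulVec, revBlock_sub, revBlock_smul, revBlock_FM_last_mulVec,
      revBlock_Mperm_mulVec A σ v hi]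
  constructor
  · intro h i hi
    simpa [h, sub_eq_zero] using (hblock i hi).symm
  · intro h
    exact ext_revBlock fun i hi => by rw [hblock i hi, h i hi, sub_self, revBlock_zero]

end Simulation

section Eigenvectors

variable (A : Fin (m + 1) → Matrix (Fin n) (Fin n) ℂ) (σ : Equiv.Perm (Fin m)) (lam : ℂ)

/-- The Horner shift `P_(m-i)(λ)`, i.e. `Horner m n A (m - i) lam`. -/
def hornerTail (i : ℕ) : Matrix (Fin n) (Fin n) ℂ :=
  ∑ k ∈ Finset.range (m + 1 - i), lam ^ k • A ((k + i : ℕ) : Fin (m + 1))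

lemma hornerTail_zero : hornerTail A lam 0 = PEval m n A lam := by
  rw [hornerTail, PEval, ← Fin.sum_univ_eq_sum_range]
  simp

lemma hornerTail_of_lt {i : ℕ} (hi : i < m) :
    hornerTail A lam i = A i + lam • hornerTail A lam (i + 1) := by
  rw [hornerTail, hornerTail, show m + 1 - i = m + 1 - (i + 1) + 1 by omega,
    Finset.sum_range_succ', Finset.smul_sum, add_comm]
  simp [smul_smul, pow_succ', add_assoc, add_comm 1]

lemma hornerTail_self : hornerTail A lam m = A m := by
  simp [hornerTail]

def invCount (i : ℕ) : ℕ := ((Finset.range i).filter (InvAt m σ)).card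

lemma invCount_succ (i : ℕ) :
    invCount σ (i + 1) = invCount σ i + if InvAt m σ i then 1 else 0 := by
  simp only [invCount, Finset.range_add_one, Finset.filter_insert]
  split_ifs <;> simp

lemma invCount_succ_of_consAt {i : ℕ} (h : ConsAt m σ i) : invCount σ (i + 1) = invCount σ i := by
  simp [invCount_succ, not_invAt_of_consAt σ h]

lemma invCount_succ_of_invAt {i : ℕ} (h : InvAt m σ i) :
    invCount σ (i + 1) = invCount σ i + 1 := by
  simp [invCount_succ, h]

lemma invCount_of_isC1 {c1 : ℕ} (hc1 : IsC1 m σ c1) : invCount σ c1 = 0 := by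
  simp only [invCount, Finset.card_eq_zero, Finset.filter_eq_empty_iff, Finset.mem_range]
  exact fun d hd => not_invAt_of_consAt σ (hc1.1 d hd)

/-- The blocks of the eigenvector of `L_σ(λ)` attached to an eigenvector `x` of `P(λ)`. -/
def eigenBlock (i : ℕ) : Matrix (Fin n) (Fin n) ℂ :=
  lam ^ invCount σ i • if ConsAt m σ i then hornerTail A lam (i + 1) else 1

lemma eigenBlock_of_isC1 {c1 : ℕ} (hc1 : IsC1 m σ c1) : eigenBlock A σ lam c1 = 1 := by
  simp [eigenBlock, hc1.2, invCount_of_isC1 σ hc1]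

lemma smul_hornerTail_mulVec {i : ℕ} (hi : i < m) (c : ℂ) (x : Fin n → ℂ) :
    c • (hornerTail A lam i *ᵥ x)
      = A i *ᵥ (c • x) + (c * lam) • (hornerTail A lam (i + 1) *ᵥ x) := by
  rw [hornerTail_of_lt A lam hi, add_mulVec, smul_mulVec, mulVec_smul, smul_add, smul_smul]

end Eigenvectors

section Recovery

variable (A : Fin (m + 1) → Matrix (Fin n) (Fin n) ℂ) {σ : Equiv.Perm (Fin m)} {lam : ℂ}
  {v : Fin m × Fin n → ℂ} {c1 : ℕ}

lemma topInput_of_LP_mulVec_eq_zero (hc1 : IsC1 m σ c1) (hv : LP m n A σ lam *ᵥ v = 0) :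
    ∀ i < m, topInput σ v i = lam ^ invCount σ i • revBlock v c1 := by
  have heq := (LP_mulVec_eq_zero_iff A σ v lam).mp hv
  intro i
  induction i with
  | zero => intro; simp [topInput_zero_of_isC1 σ v hc1, invCount]
  | succ i ih =>
    intro hi
    rcases consAt_or_invAt σ hi with hc | hinv
    · rw [← topInput_of_consAt σ v hc, ih (by omega), invCount_succ_of_consAt σ hc]
    · have hblock := heq i (by omega)
      rw [if_neg (by omega), if_pos hinv, ← topInput_of_not_consAt σ v (not_consAt_of_invAt σ hinv),
        ih (by omega)] at hblock
      rw [← hblock, invCount_succ_of_invAt σ hinv, smul_smul, pow_succ, mul_comm]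

lemma botInput_of_LP_mulVec_eq_zero (hm : 0 < m) (hc1 : IsC1 m σ c1)
    (hv : LP m n A σ lam *ᵥ v = 0) {i : ℕ} (hi : i ≤ m - 1) :
    botInput A σ v i = lam ^ invCount σ i • (hornerTail A lam i *ᵥ revBlock v c1) := by
  have heq := (LP_mulVec_eq_zero_iff A σ v lam).mp hv
  have htop := topInput_of_LP_mulVec_eq_zero A hc1 hv
  induction hi using Nat.decreasingInduction with
  | self =>
    have hlast := heq (m - 1) (by omega)
    rw [if_pos rfl, if_neg (not_invAt_last σ), topOutput,
      ← topInput_of_not_consAt σ v (not_consAt_last σ),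
      htop _ (by omega)] at hlast
    rw [smul_hornerTail_mulVec A lam (by omega), Nat.sub_add_cancel hm, hornerTail_self]
    simp only [neg_mulVec, mulVec_smul] at hlast ⊢
    linear_combination (norm := module) -hlast
  | of_succ i hi ih =>
    rcases consAt_or_invAt σ (i := i) (by omega) with hc | hinv
    · have hblock := heq i (by omega)
      rw [if_neg (by omega), if_neg (not_invAt_of_consAt σ hc), topOutput, htop i (by omega),
        ← botInput_succ_of_not_invAt A σ v (not_invAt_of_consAt σ hc), ih,
        invCount_succ_of_consAt σ hc] at hblock
      rw [smul_hornerTail_mulVec A lam (by omega)]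
      simp only [neg_mulVec, mulVec_smul] at hblock ⊢
      linear_combination (norm := module) -hblock
    · have hstep := botInput_succ_of_invAt A σ v hinv
      rw [ih, topOutput, htop i (by omega), invCount_succ_of_invAt σ hinv] at hstep
      rw [smul_hornerTail_mulVec A lam (by omega)]
      simp only [neg_mulVec, mulVec_smul] at hstep ⊢
      linear_combination (norm := module) -hstep

lemma PEval_mulVec_eq_zero_of_LP_mulVec_eq_zero (hm : 0 < m) (hc1 : IsC1 m σ c1)
    (hv : LP m n A σ lam *ᵥ v = 0) : PEval m n A lam *ᵥ revBlock v c1 = 0 := by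
  simpa [botInput, invCount, hornerTail_zero] using
    (botInput_of_LP_mulVec_eq_zero A hm hc1 hv (Nat.zero_le _)).symm

lemma revBlock_eq_eigenBlock_mulVec (hm : 0 < m) (hc1 : IsC1 m σ c1)
    (hv : LP m n A σ lam *ᵥ v = 0) {i : ℕ} (hi : i < m) :
    revBlock v i = eigenBlock A σ lam i *ᵥ revBlock v c1 := by
  rw [eigenBlock, smul_mulVec]
  by_cases hc : ConsAt m σ i
  · rw [if_pos hc, ← botInput_succ_of_not_invAt A σ v (not_invAt_of_consAt σ hc),
      botInput_of_LP_mulVec_eq_zero A hm hc1 hv (by have := hc.1; omega),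
      invCount_succ_of_consAt σ hc]
  · rw [if_neg hc, one_mulVec, ← topInput_of_not_consAt σ v hc,
      topInput_of_LP_mulVec_eq_zero A hc1 hv i hi]

end Recovery

section Extension

variable (A : Fin (m + 1) → Matrix (Fin n) (Fin n) ℂ) {σ : Equiv.Perm (Fin m)} {lam : ℂ}
  {v : Fin m × Fin n → ℂ} {x : Fin n → ℂ}

lemma topInput_of_revBlock_eq (hm : 0 < m)
    (hv : ∀ i < m, revBlock v i = eigenBlock A σ lam i *ᵥ x) {i : ℕ} (hi : i ≤ m - 1) :
    topInput σ v i = lam ^ invCount σ i • x := by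
  induction hi using Nat.decreasingInduction with
  | self =>
    rw [topInput_of_not_consAt σ v (not_consAt_last σ), hv _ (by omega), eigenBlock,
      if_neg (not_consAt_last σ), smul_mulVec, one_mulVec]
  | of_succ i hi ih =>
    by_cases hc : ConsAt m σ i
    · rw [topInput_of_consAt σ v hc, ih, invCount_succ_of_consAt σ hc]
    · rw [topInput_of_not_consAt σ v hc, hv _ (by omega), eigenBlock, if_neg hc, smul_mulVec,
        one_mulVec]

lemma botInput_of_revBlock_eq (hm : 0 < m) (hv : ∀ i < m, revBlock v i = eigenBlock A σ lam i *ᵥ x)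
    (hx : PEval m n A lam *ᵥ x = 0) :
    ∀ i < m, botInput A σ v i = lam ^ invCount σ i • (hornerTail A lam i *ᵥ x) := by
  intro i
  induction i with
  | zero => intro; simp [botInput, invCount, hornerTail_zero, hx]
  | succ i ih =>
    intro hi
    rcases consAt_or_invAt σ hi with hc | hinv
    · rw [botInput_succ_of_not_invAt A σ v (not_invAt_of_consAt σ hc), hv i (by omega),
        eigenBlock, if_pos hc, smul_mulVec, invCount_succ_of_consAt σ hc]
    · rw [botInput_succ_of_invAt A σ v hinv, topOutput, ih (by omega),
        topInput_of_revBlock_eq A hm hv (by omega), invCount_succ_of_invAt σ hinv,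
        smul_hornerTail_mulVec A lam (by omega)]
      simp only [neg_mulVec, mulVec_smul]
      module

lemma LP_mulVec_eq_zero_of_revBlock_eq (hm : 0 < m)
    (hv : ∀ i < m, revBlock v i = eigenBlock A σ lam i *ᵥ x)
    (hx : PEval m n A lam *ᵥ x = 0) : LP m n A σ lam *ᵥ v = 0 := by
  rw [LP_mulVec_eq_zero_iff]
  intro i hi
  have htop := topInput_of_revBlock_eq A hm hv (i := i) (by omega)
  have hbot := botInput_of_revBlock_eq A hm hv hx i hi
  by_cases hlast : i = m - 1
  · subst hlast
    rw [if_pos rfl, if_neg (not_invAt_last σ), topOutput, htop, hbot,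
      ← topInput_of_not_consAt σ v (not_consAt_last σ), htop,
      smul_hornerTail_mulVec A lam hi, Nat.sub_add_cancel hm, hornerTail_self]
    simp only [neg_mulVec, mulVec_smul]
    module
  · rw [if_neg hlast, hv i hi, eigenBlock]
    rcases consAt_or_invAt σ (i := i) (by omega) with hc | hinv
    · rw [if_pos hc, if_neg (not_invAt_of_consAt σ hc), topOutput, htop, hbot,
        smul_hornerTail_mulVec A lam hi]
      simp only [neg_mulVec, mulVec_smul, smul_mulVec]
      module
    · rw [if_neg (not_consAt_of_invAt σ hinv), if_pos hinv,
        topInput_of_revBlock_eq A hm hv (by omega), invCount_succ_of_invAt σ hinv]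
      simp only [smul_mulVec, one_mulVec, smul_smul, pow_succ, mul_comm]

variable (σ lam) in
def eigvec (x : Fin n → ℂ) : Fin m × Fin n → ℂ :=
  fun p => (eigenBlock A σ lam (m - 1 - p.1) *ᵥ x) p.2

lemma revBlock_eigvec {i : ℕ} (hi : i < m) :
    revBlock (eigvec A σ lam x) i = eigenBlock A σ lam i *ᵥ x := by
  rw [revBlock_of_lt _ hi]
  simp [eigvec, show m - 1 - (m - 1 - i) = i by omega]

end Extension

theorem polynomial_observable_iff_pencil_observable {r c1 : ℕ}
    (A : Fin (m + 1) → Matrix (Fin n) (Fin n) ℂ) {σ : Equiv.Perm (Fin m)}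
    (C : Matrix (Fin r) (Fin n) ℂ) (lam : ℂ) (hm : 0 < m) (hc1 : IsC1 m σ c1) :
    (∀ x, PEval m n A lam *ᵥ x = 0 → C *ᵥ x = 0 → x = 0) ↔
      ∀ v, LP m n A σ lam *ᵥ v = 0 → eC m n r (m - c1) C *ᵥ v = 0 → v = 0 := by
  constructor
  · intro h v hv hCv
    rw [eC_mulVec] at hCv
    have hx := h _ (PEval_mulVec_eq_zero_of_LP_mulVec_eq_zero A hm hc1 hv) hCv
    exact ext_revBlock fun i hi => by
      rw [revBlock_eq_eigenBlock_mulVec A hm hc1 hv hi, hx, mulVec_zero, revBlock_zero]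
  · intro h x hx hCx
    have hc1x : revBlock (eigvec A σ lam x) c1 = x := by
      rw [revBlock_eigvec A (lt_of_isC1 σ hm hc1), eigenBlock_of_isC1 A σ lam hc1, one_mulVec]
    have hv := h _ (LP_mulVec_eq_zero_of_revBlock_eq A hm (fun i => revBlock_eigvec A) hx)
      (by rw [eC_mulVec, hc1x, hCx])
    rw [← hc1x, hv, revBlock_zero]

end FiedlerPencil

theorem stmt4_general (m n r : ℕ) (hm : 2 ≤ m)
    (A : Fin (m + 1) → Matrix (Fin n) (Fin n) ℂ)
    (C : Matrix (Fin r) (Fin n) ℂ)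
    (σ : Equiv.Perm (Fin m)) (c1 : ℕ) (hc1 : IsC1 m σ c1) :
    (∀ lam : ℂ, (Matrix.fromRows (PEval m n A lam) C).rank = n) ↔
      (∀ lam : ℂ,
        (Matrix.fromRows (LP m n A σ lam)
            (if 0 < c1 then eC m n r (m - c1) C else eC m n r m C)).rank = n * m) := by
  have hcol : (if 0 < c1 then eC m n r (m - c1) C else eC m n r m C) = eC m n r (m - c1) C := by
    split_ifs with h
    · rfl
    · rw [show c1 = 0 by omega, Nat.sub_zero]
  refine forall_congr' fun lam => ?_
  rw [hcol, show n * m = Fintype.card (Fin m × Fin n) by simp [mul_comm],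
    Matrix.rank_fromRows_eq_card_width_iff,
    ← FiedlerPencil.polynomial_observable_iff_pencil_observable A C lam (by omega) hc1,
    ← Matrix.rank_fromRows_eq_card_width_iff, Fintype.card_fin]

/-- the higher order system is observable iff the linearized system is
observable: `rank [P(λ); C] = n` for all `λ` iff `rank [L_σ(λ); c] = nm` for all `λ`. -/
theorem stmt4 (m n r : ℕ) (hm : 2 ≤ m) (hn : 1 ≤ n) (hr : 1 ≤ r)
    (A : Fin (m + 1) → Matrix (Fin n) (Fin n) ℂ) (hreg : Regular m n A)
    (C : Matrix (Fin r) (Fin n) ℂ)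
    (σ : Equiv.Perm (Fin m)) (c1 i1 : ℕ) (hc1 : IsC1 m σ c1) (hi1 : IsI1 m σ c1 i1) :
    (∀ lam : ℂ, (Matrix.fromRows (PEval m n A lam) C).rank = n) ↔
      (∀ lam : ℂ,
        (Matrix.fromRows (LP m n A σ lam)
            (if 0 < c1 then eC m n r (m - c1) C else eC m n r m C)).rank = n * m) :=
  stmt4_general m n r hm A C σ c1 hc1

end
end

section
/- Let w = (w_0, w_1) be a proper permutation of {0,1,…,m} with CIP(w_0) = (c_0, i_0). Then the PGF pencil of G associated with w has the block form 𝕂_w(λ) = [[K_w(λ), e_{m−i_0} ⊗ B],[e_{m−c_0}^T ⊗ C, D]], where K_w(λ) is the PGF pencil of P associated with w. -/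
open Matrix
open Fin.NatCast

noncomputable section

/-!
For `0 < i < m` the system Fiedler matrices are `𝕄_i = diag(M_i, I_r)` and `𝕄_m = diag(M_m, 0)`,
so `𝕄̂_{w_1} = diag(M̂_{w_1}, 0)`, and in `𝕄̂_{w_0} = 𝕄̂_u 𝕄_0 𝕄̂_v` (where `w_0 = (u, 0, v)`) only
`𝕄_0` has off-diagonal blocks, `-e_m ⊗ B` and `-e_mᵀ ⊗ C`. These get multiplied by `M̂_u` on the
left and by `M̂_v` on the right. A factor `M_a` sends `e_{m-t} ⊗ B` to `e_{m-t-1} ⊗ B` if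
`a = t + 1` and fixes it otherwise (unless `a = t`, which cannot happen along the way), so `B`
climbs one block row for each initial inversion of `w_0` (`1` before `0`, `2` before `1`, …);
transposing, `C` climbs once for each initial consecution.
-/

theorem List.Nodup.idxOf_reverse_add_idxOf {α : Type*} [BEq α] [LawfulBEq α] {l : List α}
    (hl : l.Nodup) {x : α} (hx : x ∈ l) : l.reverse.idxOf x + l.idxOf x + 1 = l.length := by
  induction l with
  | nil => simp at hx
  | cons a l ih =>
    obtain ⟨ha, hl⟩ := List.nodup_cons.mp hl
    rw [List.reverse_cons, List.length_cons]
    by_cases hxa : x = a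
    · subst hxa
      rw [List.idxOf_append_of_notMem (by simpa using ha), List.idxOf_cons_self]
      simp
    · have hx' : x ∈ l := (List.mem_cons.mp hx).resolve_left hxa
      rw [List.idxOf_append_of_mem (List.mem_reverse.mpr hx'), List.idxOf_cons_ne _ (Ne.symm hxa)]
      have := ih hl hx'
      omega

def IsInvCount (w : List ℕ) (k : ℕ) : Prop :=
  (∀ d < k, LInv w d) ∧ ¬ LInv w k

def IsConsCount (w : List ℕ) (k : ℕ) : Prop :=
  (∀ d < k, LCons w d) ∧ ¬ LCons w k

theorem isCIP_iff {w : List ℕ} {c i : ℕ} : IsCIP w c i ↔ IsConsCount w c ∧ IsInvCount w i :=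
  Iff.rfl

theorem lCons_iff_lInv_reverse {w : List ℕ} (hw : w.Nodup) {d : ℕ} :
    LCons w d ↔ LInv w.reverse d := by
  simp only [LCons, LInv, List.mem_reverse]
  refine and_congr_right fun hd => and_congr_right fun hd1 => ?_
  have := hw.idxOf_reverse_add_idxOf hd
  have := hw.idxOf_reverse_add_idxOf hd1
  omega

theorem IsConsCount.reverse {w : List ℕ} (hw : w.Nodup) {k : ℕ} (h : IsConsCount w k) :
    IsInvCount w.reverse k := by
  simpa only [IsInvCount, IsConsCount, ← lCons_iff_lInv_reverse hw] using h

theorem lInv_cons_iff_of_ne {a d : ℕ} {l : List ℕ} (h₁ : a ≠ d) (h₂ : a ≠ d + 1) :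
    LInv (a :: l) d ↔ LInv l d := by
  simp only [LInv, List.mem_cons, List.idxOf_cons_ne _ h₁, List.idxOf_cons_ne _ h₂,
    h₁.symm, h₂.symm, false_or, Nat.succ_lt_succ_iff]

theorem not_lInv_cons_self (d : ℕ) (l : List ℕ) : ¬ LInv (d :: l) d := by
  simp [LInv, List.idxOf_cons_self]

theorem lInv_succ_cons_iff {d : ℕ} {l : List ℕ} : LInv ((d + 1) :: l) d ↔ d ∈ l := by
  simp [LInv, List.idxOf_cons_self, List.idxOf_cons_ne _ (Nat.succ_ne_self d)]

theorem IsInvCount.eq_zero_of_cons_zero {l : List ℕ} {k : ℕ} (h : IsInvCount (0 :: l) k) :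
    k = 0 :=
  Nat.eq_zero_of_not_pos fun hk => not_lInv_cons_self 0 l (h.1 0 hk)

theorem IsInvCount.of_cons {a k : ℕ} {l : List ℕ} (h : IsInvCount (a :: l) k) (ha : a ∉ l)
    (ha0 : a ≠ 0) (h0 : 0 ∈ l) :
    (a = k ∧ IsInvCount l (k - 1)) ∨ (a ≠ k ∧ a ≠ k + 1 ∧ IsInvCount l k) := by
  obtain ⟨hlt, hk⟩ := h
  by_cases hak : a = k
  · subst hak
    refine Or.inl ⟨rfl, fun d hd => ?_, fun hl => ha ?_⟩
    · exact (lInv_cons_iff_of_ne (by omega) (by omega)).mp (hlt d (by omega))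
    · simpa [Nat.sub_add_cancel (Nat.pos_of_ne_zero ha0)] using hl.2.1
  · have hak1 : a ≠ k + 1 := by
      rintro rfl
      refine hk (lInv_succ_cons_iff.mpr ?_)
      rcases k with _ | k
      · exact h0
      · exact (List.mem_cons.mp (hlt k (by omega)).2.1).resolve_left (by omega)
    have hne : ∀ d < k, a ≠ d ∧ a ≠ d + 1 := fun d hd =>
      ⟨by rintro rfl; exact not_lInv_cons_self a l (hlt a hd),
       by rintro rfl; exact not_lInv_cons_self _ l (hlt (d + 1) (by omega))⟩
    exact Or.inr ⟨hak, hak1, fun d hd => (lInv_cons_iff_of_ne (hne d hd).1 (hne d hd).2).mp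
      (hlt d hd), fun hl => hk ((lInv_cons_iff_of_ne hak hak1).mpr hl)⟩

section Fiedler

variable {m n r : ℕ} {A : Fin (m + 1) → Matrix (Fin n) (Fin n) ℂ}

theorem eB_zero (B : Matrix (Fin n) (Fin r) ℂ) : eB m n r 0 B = 0 := by
  ext p q
  simp [eB]

theorem mul_eB_of_blockCol (M : Matrix (Fin m × Fin n) (Fin m × Fin n) ℂ) (b b' : Fin m)
    (hM : ∀ p k, M p (b, k) = if p = (b', k) then 1 else 0) (B : Matrix (Fin n) (Fin r) ℂ) :
    M * eB m n r (b + 1) B = eB m n r (b' + 1) B := by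
  ext p q
  by_cases hp : p.1 = b' <;>
    simp [Matrix.mul_apply, eB, Fintype.sum_prod_type, hM, Prod.ext_iff, Fin.val_eq_val, hp]

theorem FM_apply_of_ne {i : ℕ} (hi0 : i ≠ 0) (him : i < m) {b : Fin m} (h₁ : (b : ℕ) ≠ m - i - 1)
    (h₂ : (b : ℕ) ≠ m - i) (p : Fin m × Fin n) (k : Fin n) :
    FM m n A i p (b, k) = if p = (b, k) then 1 else 0 := by
  by_cases hp : p.1 = b
  · simp [FM, hi0, him.ne, hp, h₁, h₂, Prod.ext_iff, Matrix.one_apply]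
  · simp [FM, hi0, him.ne, hp, h₁, h₂, Prod.ext_iff]

theorem FM_apply_sub_self {i : ℕ} (hi0 : i ≠ 0) (him : i < m) (p : Fin m × Fin n) (k : Fin n) :
    FM m n A i p (⟨m - i, by omega⟩, k) = if p = (⟨m - i - 1, by omega⟩, k) then 1 else 0 := by
  have hne : m - i ≠ m - i - 1 := by omega
  simp only [FM, hi0, him.ne, hne, Matrix.of_apply, if_false, and_false, Prod.ext_iff,
    ← Fin.val_inj]
  split_ifs <;> simp_all [Matrix.one_apply] <;> omega

theorem FM_mul_eB_of_ne {i t : ℕ} (hi0 : i ≠ 0) (him : i < m) (h₁ : i ≠ t) (h₂ : i ≠ t + 1)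
    (B : Matrix (Fin n) (Fin r) ℂ) : FM m n A i * eB m n r (m - t) B = eB m n r (m - t) B := by
  rcases lt_or_ge t m with htm | htm
  · have hb := mul_eB_of_blockCol (FM m n A i) ⟨m - t - 1, by omega⟩ ⟨m - t - 1, by omega⟩
      (FM_apply_of_ne hi0 him (by simp; omega) (by simp; omega)) B
    simpa [Nat.sub_add_cancel (Nat.sub_pos_of_lt htm)] using hb
  · rw [Nat.sub_eq_zero_of_le htm, eB_zero, Matrix.mul_zero]

theorem FM_succ_mul_eB {t : ℕ} (ht : t + 1 < m) (B : Matrix (Fin n) (Fin r) ℂ) :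
    FM m n A (t + 1) * eB m n r (m - t) B = eB m n r (m - (t + 1)) B := by
  have hb := mul_eB_of_blockCol (FM m n A (t + 1)) ⟨m - (t + 1), by omega⟩
    ⟨m - (t + 1) - 1, by omega⟩ (FM_apply_sub_self t.succ_ne_zero ht) B
  simpa [show m - (t + 1) + 1 = m - t by omega, show m - (t + 1) - 1 + 1 = m - (t + 1) by omega]
    using hb

theorem FM_transpose (i : ℕ) : (FM m n A i)ᵀ = FM m n (fun j => (A j)ᵀ) i := by
  ext ⟨a, x⟩ ⟨b, y⟩
  simp only [FM, Matrix.transpose_apply, Matrix.of_apply, ← Fin.val_inj]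
  split_ifs <;> first | omega | simp [Matrix.one_apply, eq_comm]

theorem eC_eq_transpose_eB (j : ℕ) (C : Matrix (Fin r) (Fin n) ℂ) :
    eC m n r j C = (eB m n r j Cᵀ)ᵀ := by
  ext q p
  simp [eC, eB]

theorem prod_FM_mul_eB (u v : List ℕ) (hu : ∀ a ∈ u, a < m) (hnd : (u ++ 0 :: v).Nodup) {k : ℕ}
    (hk : IsInvCount (u ++ 0 :: v) k) (B : Matrix (Fin n) (Fin r) ℂ) :
    (u.map (FM m n A)).prod * eB m n r m B = eB m n r (m - k) B := by
  induction u generalizing k with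
  | nil => simp [hk.eq_zero_of_cons_zero]
  | cons a u ih =>
    obtain ⟨ha, hnd'⟩ := List.nodup_cons.mp hnd
    have ha0 : a ≠ 0 := fun h => ha (by simp [h])
    have hu' : ∀ b ∈ u, b < m := fun b hb => hu b (List.mem_cons_of_mem a hb)
    rw [List.map_cons, List.prod_cons, Matrix.mul_assoc]
    rcases hk.of_cons ha ha0 (by simp) with ⟨rfl, hk⟩ | ⟨h₁, h₂, hk⟩
    · obtain ⟨t, rfl⟩ := Nat.exists_eq_succ_of_ne_zero ha0
      rw [ih hu' hnd' hk, Nat.succ_sub_one, FM_succ_mul_eB (hu _ List.mem_cons_self)]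
    · rw [ih hu' hnd' hk, FM_mul_eB_of_ne ha0 (hu a List.mem_cons_self) h₁ h₂]

/-- Transposition turns the initial consecutions of `w` into the initial inversions of its
reverse. -/
theorem eC_mul_prod_FM (u v : List ℕ) (hv : ∀ a ∈ v, a < m) (hnd : (u ++ 0 :: v).Nodup)
    {k : ℕ} (hk : IsConsCount (u ++ 0 :: v) k) (C : Matrix (Fin r) (Fin n) ℂ) :
    eC m n r m C * (v.map (FM m n A)).prod = eC m n r (m - k) C := by
  have hrev : (u ++ 0 :: v).reverse = v.reverse ++ 0 :: u.reverse := by simp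
  have hcol := prod_FM_mul_eB (A := fun j => (A j)ᵀ) v.reverse u.reverse
    (by simpa using hv) (hrev ▸ List.nodup_reverse.mpr hnd) (hrev ▸ hk.reverse hnd) Cᵀ
  rw [eC_eq_transpose_eB, eC_eq_transpose_eB, ← hcol, ← Matrix.transpose_transpose
    (List.prod _), Matrix.transpose_list_prod, ← Matrix.transpose_mul]
  simp [Function.comp_def, FM_transpose]

end Fiedler

/-- For singular `X` both inverses are the junk value `0`; this spares proving that the Fiedler
matrices are invertible. -/
theorem Matrix.exists_inv_fromBlocks_zero_one {α β : Type*} [Fintype α] [Fintype β]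
    [DecidableEq α] [DecidableEq β] (X : Matrix α α ℂ) :
    ∃ Y : Matrix β β ℂ, (fromBlocks X 0 0 (1 : Matrix β β ℂ))⁻¹ = fromBlocks X⁻¹ 0 0 Y := by
  by_cases hX : IsUnit X.det
  · refine ⟨1, Matrix.inv_eq_right_inv ?_⟩
    simp [fromBlocks_multiply, Matrix.mul_nonsing_inv _ hX]
  · refine ⟨0, ?_⟩
    rw [Matrix.nonsing_inv_apply_not_isUnit _ hX, fromBlocks_zero,
      Matrix.nonsing_inv_apply_not_isUnit]
    simpa [det_fromBlocks_zero₂₁] using hX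

theorem List.exists_prod_map_eq_fromBlocks {ι α β : Type*} [Fintype α] [Fintype β]
    [DecidableEq α] [DecidableEq β] (l : List ι) (f : ι → Matrix (α ⊕ β) (α ⊕ β) ℂ)
    (g : ι → Matrix α α ℂ) (h : ∀ i ∈ l, ∃ Y, f i = fromBlocks (g i) 0 0 Y) :
    ∃ Y, (l.map f).prod = fromBlocks (l.map g).prod 0 0 Y := by
  induction l with
  | nil => exact ⟨1, by simp⟩
  | cons a l ih =>
    obtain ⟨Ya, ha⟩ := h a List.mem_cons_self
    obtain ⟨Y, hY⟩ := ih fun i hi => h i (List.mem_cons_of_mem a hi)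
    exact ⟨Ya * Y, by simp [ha, hY, fromBlocks_multiply]⟩

section System

variable {m n r : ℕ} {A : Fin (m + 1) → Matrix (Fin n) (Fin n) ℂ} {B : Matrix (Fin n) (Fin r) ℂ}
  {C : Matrix (Fin r) (Fin n) ℂ} {D : Matrix (Fin r) (Fin r) ℂ}

theorem SFM_of_ne {i : ℕ} (h₀ : i ≠ 0) (hm : i ≠ m) :
    SFM m n r A B C D i = fromBlocks (FM m n A i) 0 0 1 := by
  simp [SFM, h₀, hm]

theorem SFM_self (hm : m ≠ 0) : SFM m n r A B C D m = fromBlocks (FM m n A m) 0 0 0 := by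
  simp [SFM, hm]

theorem prod_map_SFM {l : List ℕ} (hl : ∀ i ∈ l, i ≠ 0 ∧ i ≠ m) :
    (l.map (SFM m n r A B C D)).prod = fromBlocks (l.map (FM m n A)).prod 0 0 1 := by
  induction l with
  | nil => simp
  | cons a l ih =>
    obtain ⟨ha₀, ham⟩ := hl a List.mem_cons_self
    simp [SFM_of_ne ha₀ ham, ih fun i hi => hl i (List.mem_cons_of_mem a hi), fromBlocks_multiply]

theorem hatS0_eq {u v : List ℕ} (hl : ∀ i ∈ u ++ v, i ≠ 0 ∧ i ≠ m) :
    hatS0 m n r A B C D (u ++ 0 :: v) =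
      fromBlocks (hatM0 m n A (u ++ 0 :: v)) (-((u.map (FM m n A)).prod * eB m n r m B))
        (-(eC m n r m C * (v.map (FM m n A)).prod)) (-D) := by
  simp [hatS0, hatM0, prod_map_SFM fun i hi => hl i (List.mem_append_left v hi),
    prod_map_SFM fun i hi => hl i (List.mem_append_right u hi), SFM, fromBlocks_multiply]

theorem hatS1_eq {l : List ℕ} (h₀ : 0 ∉ l) (hm : m ∈ l) :
    hatS1 m n r A B C D l = fromBlocks (hatM1 m n A l) 0 0 0 := by
  have hfactor : ∀ i ∈ l, ∃ Y,
      (if i = m then SFM m n r A B C D m else (SFM m n r A B C D i)⁻¹) =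
        fromBlocks (if i = m then FM m n A m else (FM m n A i)⁻¹) 0 0 Y := by
    intro i hi
    have hi₀ : i ≠ 0 := fun h => h₀ (h ▸ hi)
    by_cases him : i = m
    · exact ⟨0, by simp [him, SFM_self (him ▸ hi₀)]⟩
    · simpa [him, SFM_of_ne hi₀ him] using Matrix.exists_inv_fromBlocks_zero_one (FM m n A i)
  obtain ⟨p, q, rfl⟩ := List.append_of_mem hm
  obtain ⟨Yp, hp⟩ := p.exists_prod_map_eq_fromBlocks _ _ fun i hi => hfactor i (by simp [hi])
  obtain ⟨Yq, hq⟩ := q.exists_prod_map_eq_fromBlocks _ _ fun i hi => hfactor i (by simp [hi])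
  have hm₀ : m ≠ 0 := fun h => h₀ (h ▸ hm)
  simp only [hatS1, hatM1, List.map_append, List.map_cons, List.prod_append, List.prod_cons, hp,
    hq, if_pos]
  rw [SFM_self hm₀]
  simp [fromBlocks_multiply]

end System

theorem stmt6_general (m n r : ℕ)
    (A : Fin (m + 1) → Matrix (Fin n) (Fin n) ℂ)
    (B : Matrix (Fin n) (Fin r) ℂ) (C : Matrix (Fin r) (Fin n) ℂ)
    (D : Matrix (Fin r) (Fin r) ℂ)
    (w0 w1 : List ℕ) (hw : ProperPerm m w0 w1)
    (c0 i0 : ℕ) (hcip : IsCIP w0 c0 i0) :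
    ∀ lam : ℂ,
      SKP m n r A B C D w0 w1 lam =
        Matrix.fromBlocks (KP m n A w0 w1 lam) (eB m n r (m - i0) B)
          (eC m n r (m - c0) C) D := by
  intro lam
  obtain ⟨hperm, h0, hm⟩ := hw
  obtain ⟨hcons, hinv⟩ := isCIP_iff.mp hcip
  obtain ⟨hnd, -, hdisj⟩ := List.nodup_append'.mp (hperm.nodup_iff.mpr List.nodup_range)
  have hlt : ∀ a ∈ w0, a < m := fun a ha => lt_of_le_of_ne
    (Nat.lt_succ_iff.mp (List.mem_range.mp (hperm.subset (List.mem_append_left w1 ha))))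
    fun h => hdisj ha (h ▸ hm)
  obtain ⟨u, v, rfl⟩ := List.append_of_mem h0
  have hmid : ∀ i ∈ u ++ v, i ≠ 0 ∧ i ≠ m := fun i hi =>
    ⟨fun h => (List.nodup_cons.mp (List.nodup_middle.mp hnd)).1 (h ▸ hi),
     (hlt i (List.perm_middle.symm.subset (List.mem_cons_of_mem 0 hi))).ne⟩
  rw [SKP, KP, hatS1_eq (fun h => hdisj h0 h) hm, hatS0_eq hmid,
    prod_FM_mul_eB u v (fun a ha => hlt a (by simp [ha])) hnd hinv,
    eC_mul_prod_FM u v (fun a ha => hlt a (by simp [ha])) hnd hcons]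
  simp [sub_eq_add_neg, fromBlocks_smul, fromBlocks_neg, fromBlocks_add]

/-- the PGF pencil `𝕂_w(λ)` of `G` has the block form
`[[K_w(λ), e_{m−i0} ⊗ B], [e_{m−c0}^T ⊗ C, D]]` where `CIP(w0) = (c0, i0)`. -/
theorem stmt6 (m n r : ℕ) (hm : 2 ≤ m) (hn : 1 ≤ n) (hr : 1 ≤ r)
    (A : Fin (m + 1) → Matrix (Fin n) (Fin n) ℂ) (hreg : Regular m n A)
    (B : Matrix (Fin n) (Fin r) ℂ) (C : Matrix (Fin r) (Fin n) ℂ)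
    (D : Matrix (Fin r) (Fin r) ℂ)
    (w0 w1 : List ℕ) (hw : ProperPerm m w0 w1)
    (c0 i0 : ℕ) (hcip : IsCIP w0 c0 i0) :
    ∀ lam : ℂ,
      SKP m n r A B C D w0 w1 lam =
        Matrix.fromBlocks (KP m n A w0 w1 lam) (eB m n r (m - i0) B)
          (eC m n r (m - c0) C) D :=
  stmt6_general m n r A B C D w0 w1 hw c0 i0 hcip

end
end

section
/- Let w = (w_0, w_1) be a proper permutation of {0,1,…,m}, and assume B ≠ 0 and C ≠ 0. Then the PGF pencil 𝕂_w(λ) of G is block tridiagonal if and only if the PGF pencil K_w(λ) of P is block tridiagonal and CIP(w_0) = (0, 0); in that case 𝕂_w(λ) = [[K_w(λ), e_m ⊗ B],[e_m^T ⊗ C, D]]. -/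
open Matrix
open Fin.NatCast

noncomputable section

/-!
Write `w₀ = L ++ 0 :: R`. For `0 < i < m` the system Fiedler matrix `𝕄_i` is `diag(M_i, I_r)` and
`𝕄_m = diag(M_m, 0)`, so multiplying out gives
`𝕂_w(λ) = [[K_w(λ), M_L (e_m ⊗ B)], [(e_mᵀ ⊗ C) M_R, D]]`, where `M_L`, `M_R` are the products of
the Fiedler matrices listed in `L` and `R`. Every `M_i` with `2 ≤ i ≤ m` agrees with the identity on
the last block row and column, while `M_1` has a zero last diagonal block. So if `1 ∉ w₀` the
corners are exactly `e_m ⊗ B` and `e_mᵀ ⊗ C`. If instead `1 ∈ L`, the corner `M_L (e_m ⊗ B)` has a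
zero last block row, and block tridiagonality makes it vanish on all other rows as well; this
contradicts `B ≠ 0`, because `M_L` is invertible (each `M_i`, `0 < i < m`, is a block transvection
times a block transposition). The case `1 ∈ R` is symmetric. Finally, as `0 ∈ w₀`,
`CIP(w₀) = (0, 0)` says exactly that `1 ∉ w₀`.
-/

namespace Matrix

variable {ι κ R : Type*} [Fintype ι] [DecidableEq ι]

section Semiring

variable [Semiring R]

theorem mul_apply_of_row_eq_one {X : Matrix ι ι R} {p : ι}
    (hX : ∀ q, X p q = (1 : Matrix ι ι R) p q) (M : Matrix ι κ R) (j : κ) :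
    (X * M) p j = M p j := by
  rw [mul_apply, Finset.sum_congr rfl fun q _ => by rw [hX q], ← mul_apply, Matrix.one_mul]

theorem mul_apply_of_col_eq_one {Y : Matrix ι ι R} {q : ι}
    (hY : ∀ p, Y p q = (1 : Matrix ι ι R) p q) (M : Matrix κ ι R) (j : κ) :
    (M * Y) j q = M j q := by
  rw [mul_apply, Finset.sum_congr rfl fun p _ => by rw [hY p], ← mul_apply, Matrix.mul_one]

def identityOn (s : Set ι) : Submonoid (Matrix ι ι R) where
  carrier := {X | ∀ p q, p ∈ s ∨ q ∈ s → X p q = (1 : Matrix ι ι R) p q}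
  one_mem' _ _ _ := rfl
  mul_mem' {X Y} hX hY p q hpq := by
    rcases hpq with hp | hq
    · rw [mul_apply_of_row_eq_one (fun q => hX p q (.inl hp)), hY p q (.inl hp)]
    · rw [mul_apply_of_col_eq_one (fun p => hY p q (.inr hq)), hX p q (.inr hq)]

variable {s : Set ι}

theorem mul_eq_right_of_mem_identityOn {X : Matrix ι ι R} (hX : X ∈ identityOn s)
    {V : Matrix ι κ R} (hV : ∀ p ∉ s, ∀ j, V p j = 0) : X * V = V := by
  ext p j
  by_cases hp : p ∈ s
  · exact mul_apply_of_row_eq_one (fun q => hX p q (.inl hp)) V j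
  · rw [hV p hp, mul_apply]
    refine Finset.sum_eq_zero fun q _ => ?_
    by_cases hq : q ∈ s
    · rw [hX p q (.inr hq), one_apply_ne (by rintro rfl; exact hp hq), zero_mul]
    · rw [hV q hq, mul_zero]

theorem mul_eq_left_of_mem_identityOn {Y : Matrix ι ι R} (hY : Y ∈ identityOn s)
    {W : Matrix κ ι R} (hW : ∀ q ∉ s, ∀ j, W j q = 0) : W * Y = W := by
  ext j q
  by_cases hq : q ∈ s
  · exact mul_apply_of_col_eq_one (fun p => hY p q (.inr hq)) W j
  · rw [hW q hq, mul_apply]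
    refine Finset.sum_eq_zero fun p _ => ?_
    by_cases hp : p ∈ s
    · rw [hY p q (.inl hp), one_apply_ne (by rintro rfl; exact hq hp), mul_zero]
    · rw [hW p hp, zero_mul]

theorem mul_mul_apply_of_mem_identityOn {X Y : Matrix ι ι R} (hX : X ∈ identityOn s)
    (hY : Y ∈ identityOn s) {p q : ι} (hp : p ∈ s) (hq : q ∈ s) (F : Matrix ι ι R) :
    (X * F * Y) p q = F p q := by
  rw [mul_apply_of_col_eq_one (fun p => hY p q (.inr hq)),
    mul_apply_of_row_eq_one (fun q => hX p q (.inl hp))]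

end Semiring

section CommRing

variable [CommRing R] {s : Set ι} {X : Matrix ι ι R}

theorem eq_zero_of_isUnit_of_mul_apply_eq_zero (hX : IsUnit X)
    (hXs : ∀ p ∈ s, ∀ q ∈ s, X p q = 0) {V : Matrix ι κ R}
    (hV : ∀ q ∉ s, ∀ j, V q j = 0)
    (hXV : ∀ p ∉ s, ∀ j, (X * V) p j = 0) : V = 0 := by
  have hzero : X * V = 0 := by
    ext p j
    by_cases hp : p ∈ s
    · rw [mul_apply, zero_apply]
      refine Finset.sum_eq_zero fun q _ => ?_
      by_cases hq : q ∈ s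
      · rw [hXs p hp q hq, zero_mul]
      · rw [hV q hq, mul_zero]
    · rw [hXV p hp j, zero_apply]
  rw [← nonsing_inv_mul_cancel_left (A := X) V ((isUnit_iff_isUnit_det X).mp hX), hzero,
    Matrix.mul_zero]

theorem eq_zero_of_isUnit_of_apply_mul_eq_zero (hX : IsUnit X)
    (hXs : ∀ p ∈ s, ∀ q ∈ s, X p q = 0) {W : Matrix κ ι R}
    (hW : ∀ q ∉ s, ∀ j, W j q = 0)
    (hWX : ∀ p ∉ s, ∀ j, (W * X) j p = 0) : W = 0 := by
  have hzero : W * X = 0 := by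
    ext j p
    by_cases hp : p ∈ s
    · rw [mul_apply, zero_apply]
      refine Finset.sum_eq_zero fun q _ => ?_
      by_cases hq : q ∈ s
      · rw [hXs q hq p hp, mul_zero]
      · rw [hW q hq, zero_mul]
    · rw [hWX p hp j, zero_apply]
  rw [← mul_nonsing_inv_cancel_right (A := X) W ((isUnit_iff_isUnit_det X).mp hX), hzero,
    Matrix.zero_mul]

end CommRing

theorem isUnit_one_sub_single_mul_swap [Ring R] {u v : ι} (huv : u ≠ v) (x : R) :
    IsUnit ((1 - single u v x) * (Equiv.swap u v).permMatrix R) := by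
  refine (IsNilpotent.isUnit_one_sub ⟨2, ?_⟩).mul ?_
  · simp [sq, huv.symm]
  · exact (Group.isUnit (Equiv.swap u v)⁻¹).map (permMatrixHom (R := R))

omit [Fintype ι] in
theorem one_apply_prod_mk [DecidableEq κ] [Zero R] [One R] (a b : ι) (x y : κ) :
    (1 : Matrix (ι × κ) (ι × κ) R) (a, x) (b, y) =
      (if a = b then (1 : Matrix κ κ R) else 0) x y := by
  by_cases h : a = b <;> simp [h, one_apply]

theorem prod_map_fromBlocks_zero {ι' : Type*} [Fintype ι'] [DecidableEq ι'] [Semiring R]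
    {α : Type*} (f : α → Matrix ι ι R) (g : α → Matrix ι' ι' R) (l : List α) :
    (l.map fun a => fromBlocks (f a) 0 0 (g a)).prod =
      fromBlocks (l.map f).prod 0 0 (l.map g).prod := by
  induction l with
  | nil => simp [fromBlocks_one]
  | cons a l ih => simp [ih, fromBlocks_multiply]

end Matrix


section Fiedler

variable {m n : ℕ} {A : Fin (m + 1) → Matrix (Fin n) (Fin n) ℂ}

def lastBlock (m n : ℕ) : Set (Fin m × Fin n) := {p | (p.1 : ℕ) + 1 = m}

@[simp]
theorem mem_lastBlock {p : Fin m × Fin n} : p ∈ lastBlock m n ↔ (p.1 : ℕ) + 1 = m := Iff.rfl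

theorem FM_mem_identityOn_lastBlock {i : ℕ} (hi : i ∈ Set.Icc 2 m) :
    FM m n A i ∈ identityOn (lastBlock m n) := by
  obtain ⟨h2, him⟩ := hi
  rintro ⟨a, x⟩ ⟨b, y⟩ hab
  simp only [mem_lastBlock] at hab
  rw [one_apply_prod_mk, FM, of_apply]
  dsimp only
  rw [if_neg (by omega)]
  rcases eq_or_ne i m with rfl | him'
  · rw [if_pos rfl]
    rcases eq_or_ne a b with rfl | hab'
    · rw [if_pos rfl, if_pos rfl, if_neg (by omega)]
    · rw [if_neg hab', if_neg hab']
  · rw [if_neg him', if_neg (by omega), if_neg (by omega), if_neg (by omega), if_neg (by omega)]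

theorem FM_one_apply_lastBlock (hm : 2 ≤ m) {p q : Fin m × Fin n} (hp : p ∈ lastBlock m n)
    (hq : q ∈ lastBlock m n) : FM m n A 1 p q = 0 := by
  rw [mem_lastBlock] at hp hq
  rw [FM, of_apply, if_neg one_ne_zero, if_neg (by omega), if_neg (by omega), if_neg (by omega),
    if_neg (by omega), if_pos (by omega), Matrix.zero_apply]

theorem FM_eq_comp_transvection_mul_swap {i : ℕ} (hi0 : i ≠ 0) (him : i ≠ m) {u v : Fin m}
    (hu : (u : ℕ) + 1 = m - i) (hv : (v : ℕ) = m - i) :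
    FM m n A i = comp _ _ _ _ _ ((1 - single u v (A i)) * (Equiv.swap u v).permMatrix _) := by
  have huv : u ≠ v := by rw [Ne, Fin.ext_iff]; omega
  have hu' (a : Fin m) : (a : ℕ) = m - i - 1 ↔ a = u := by rw [Fin.ext_iff]; omega
  have hv' (a : Fin m) : (a : ℕ) = m - i ↔ a = v := by rw [Fin.ext_iff]; omega
  rw [PEquiv.mul_toMatrix_toPEquiv, Equiv.symm_swap]
  ext ⟨a, x⟩ ⟨b, y⟩
  simp only [FM, of_apply, comp_apply, submatrix_apply, id, Matrix.sub_apply, one_apply,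
    single_apply, if_neg hi0, if_neg him, hu', hv', eq_comm (a := u), eq_comm (a := v)]
  clear hu hv hu' hv'
  by_cases hbu : b = u
  · subst b
    by_cases hau : a = u <;> by_cases hav : a = v <;> simp [*, huv.symm]
  by_cases hbv : b = v
  · subst b
    by_cases hau : a = u <;> by_cases hav : a = v <;> simp [*, huv.symm]
  · rw [Equiv.swap_apply_of_ne_of_ne hbu hbv]
    by_cases hab : a = b <;> simp [*]

theorem isUnit_FM {i : ℕ} (hi : i ∈ Set.Ico 1 m) : IsUnit (FM m n A i) := by
  obtain ⟨h1, him⟩ := hi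
  rw [FM_eq_comp_transvection_mul_swap (u := ⟨m - i - 1, by omega⟩) (v := ⟨m - i, by omega⟩)
    (by omega) (by omega) (by dsimp only; omega) rfl, isUnit_comp_iff]
  exact isUnit_one_sub_single_mul_swap (Fin.ne_of_val_ne (by dsimp only; omega)) _

theorem prod_map_FM_mem_identityOn {L : List ℕ} (hL : ∀ i ∈ L, i ∈ Set.Icc 2 m) :
    (L.map (FM m n A)).prod ∈ identityOn (lastBlock m n) :=
  Submonoid.list_prod_mem _ <|
    List.forall_mem_map.2 fun i hi => FM_mem_identityOn_lastBlock (hL i hi)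

theorem isUnit_prod_map_FM {L : List ℕ} (hL : ∀ i ∈ L, i ∈ Set.Ico 1 m) :
    IsUnit (L.map (FM m n A)).prod :=
  List.prod_isUnit <| List.forall_mem_map.2 fun i hi => isUnit_FM (hL i hi)

theorem forall_mem_Icc_two {L : List ℕ} (hL : ∀ i ∈ L, i ∈ Set.Ico 1 m) (h1 : 1 ∉ L) :
    ∀ i ∈ L, i ∈ Set.Icc 2 m := fun i hi => by
  obtain ⟨hi1, him⟩ := hL i hi
  exact ⟨Nat.lt_of_le_of_ne hi1 fun h => h1 (h ▸ hi), him.le⟩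

theorem prod_map_FM_apply_lastBlock (hm : 2 ≤ m) {L : List ℕ}
    (hL : ∀ i ∈ L, i ∈ Set.Ico 1 m) (hnd : L.Nodup) (h1 : 1 ∈ L) {p q : Fin m × Fin n}
    (hp : p ∈ lastBlock m n) (hq : q ∈ lastBlock m n) : (L.map (FM m n A)).prod p q = 0 := by
  obtain ⟨P, Q, rfl⟩ := List.append_of_mem h1
  obtain ⟨h1P, h1Q⟩ : 1 ∉ P ∧ 1 ∉ Q := by
    simpa [not_or] using (List.nodup_cons.1 (List.nodup_middle.1 hnd)).1
  have hP := forall_mem_Icc_two (fun i hi => hL i (by simp [hi])) h1P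
  have hQ := forall_mem_Icc_two (fun i hi => hL i (by simp [hi])) h1Q
  rw [List.map_append, List.map_cons, List.prod_append, List.prod_cons, ← Matrix.mul_assoc,
    mul_mul_apply_of_mem_identityOn (prod_map_FM_mem_identityOn hP)
      (prod_map_FM_mem_identityOn hQ) hp hq, FM_one_apply_lastBlock hm hp hq]

end Fiedler

section Corners

variable {m n r : ℕ} {A : Fin (m + 1) → Matrix (Fin n) (Fin n) ℂ}
  {B : Matrix (Fin n) (Fin r) ℂ} {C : Matrix (Fin r) (Fin n) ℂ}

theorem eB_apply_of_not_mem_lastBlock (p : Fin m × Fin n) (hp : p ∉ lastBlock m n)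
    (j : Fin r) : eB m n r m B p j = 0 :=
  if_neg hp

theorem eC_apply_of_not_mem_lastBlock (p : Fin m × Fin n) (hp : p ∉ lastBlock m n)
    (j : Fin r) : eC m n r m C j p = 0 :=
  if_neg hp

theorem eB_ne_zero (hm : 0 < m) (hB : B ≠ 0) : eB m n r m B ≠ 0 := by
  refine fun h => hB (ext fun x j => ?_)
  simpa [eB, Nat.sub_add_cancel hm] using congrFun (congrFun h (⟨m - 1, by omega⟩, x)) j

theorem eC_ne_zero (hm : 0 < m) (hC : C ≠ 0) : eC m n r m C ≠ 0 := by
  refine fun h => hC (ext fun j x => ?_)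
  simpa [eC, Nat.sub_add_cancel hm] using congrFun (congrFun h j) (⟨m - 1, by omega⟩, x)

theorem prod_map_FM_mul_eB {L : List ℕ} (hL : ∀ i ∈ L, i ∈ Set.Icc 2 m) :
    (L.map (FM m n A)).prod * eB m n r m B = eB m n r m B :=
  mul_eq_right_of_mem_identityOn (prod_map_FM_mem_identityOn hL) eB_apply_of_not_mem_lastBlock

theorem eC_mul_prod_map_FM {L : List ℕ} (hL : ∀ i ∈ L, i ∈ Set.Icc 2 m) :
    eC m n r m C * (L.map (FM m n A)).prod = eC m n r m C :=
  mul_eq_left_of_mem_identityOn (prod_map_FM_mem_identityOn hL) eC_apply_of_not_mem_lastBlock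

theorem prod_map_FM_mul_eB_apply_eq_zero_iff (hm : 2 ≤ m) (hB : B ≠ 0) {L : List ℕ}
    (hL : ∀ i ∈ L, i ∈ Set.Ico 1 m) (hnd : L.Nodup) :
    (∀ p ∉ lastBlock m n, ∀ j, ((L.map (FM m n A)).prod * eB m n r m B) p j = 0) ↔
      1 ∉ L := by
  refine ⟨fun hzero h1 => eB_ne_zero (zero_lt_two.trans_le hm) hB ?_, fun h1 p hp j => ?_⟩
  · exact eq_zero_of_isUnit_of_mul_apply_eq_zero (isUnit_prod_map_FM hL)
      (fun p hp q hq => prod_map_FM_apply_lastBlock hm hL hnd h1 hp hq)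
      eB_apply_of_not_mem_lastBlock hzero
  · rw [prod_map_FM_mul_eB (forall_mem_Icc_two hL h1), eB_apply_of_not_mem_lastBlock p hp]

theorem eC_mul_prod_map_FM_apply_eq_zero_iff (hm : 2 ≤ m) (hC : C ≠ 0) {L : List ℕ}
    (hL : ∀ i ∈ L, i ∈ Set.Ico 1 m) (hnd : L.Nodup) :
    (∀ p ∉ lastBlock m n, ∀ j, (eC m n r m C * (L.map (FM m n A)).prod) j p = 0) ↔
      1 ∉ L := by
  refine ⟨fun hzero h1 => eC_ne_zero (zero_lt_two.trans_le hm) hC ?_, fun h1 p hp j => ?_⟩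
  · exact eq_zero_of_isUnit_of_apply_mul_eq_zero (isUnit_prod_map_FM hL)
      (fun p hp q hq => prod_map_FM_apply_lastBlock hm hL hnd h1 hp hq)
      eC_apply_of_not_mem_lastBlock hzero
  · rw [eC_mul_prod_map_FM (forall_mem_Icc_two hL h1), eC_apply_of_not_mem_lastBlock p hp]

end Corners

section SystemPencil

variable {m n r : ℕ} {A : Fin (m + 1) → Matrix (Fin n) (Fin n) ℂ}
  {B : Matrix (Fin n) (Fin r) ℂ} {C : Matrix (Fin r) (Fin n) ℂ} {D : Matrix (Fin r) (Fin r) ℂ}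

theorem SFM_of_mem_Ico {i : ℕ} (hi : i ∈ Set.Ico 1 m) :
    SFM m n r A B C D i = fromBlocks (FM m n A i) 0 0 1 := by
  obtain ⟨h1, him⟩ := hi
  rw [SFM, if_neg (by omega), if_neg (by omega)]

theorem inv_SFM_of_mem_Ico {i : ℕ} (hi : i ∈ Set.Ico 1 m) :
    (SFM m n r A B C D i)⁻¹ = fromBlocks (FM m n A i)⁻¹ 0 0 1 := by
  rw [SFM_of_mem_Ico hi,
    inv_fromBlocks_zero₁₂_of_isUnit_iff _ _ _ (iff_of_true (isUnit_FM hi) isUnit_one)]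
  simp

theorem hatS1_eq_fromBlocks {w1 : List ℕ} (hw1 : ∀ i ∈ w1, i ∈ Set.Icc 1 m)
    (hm : m ∈ w1) :
    hatS1 m n r A B C D w1 = fromBlocks (hatM1 m n A w1) 0 0 0 := by
  have hfactor : ∀ i ∈ w1,
      (if i = m then SFM m n r A B C D m else (SFM m n r A B C D i)⁻¹) =
        fromBlocks (if i = m then FM m n A m else (FM m n A i)⁻¹) 0 0
          (if i = m then 0 else 1) := by
    intro i hi
    split_ifs with him
    · rw [SFM, if_neg (by have := (hw1 m hm).1; omega), if_pos rfl]
    · obtain ⟨h1, him'⟩ := hw1 i hi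
      exact inv_SFM_of_mem_Ico ⟨h1, lt_of_le_of_ne him' him⟩
  have hzero : (w1.map fun i => if i = m then (0 : Matrix (Fin r) (Fin r) ℂ) else 1).prod = 0 :=
    List.prod_eq_zero (List.mem_map.2 ⟨m, hm, if_pos rfl⟩)
  rw [hatS1, List.map_congr_left hfactor, prod_map_fromBlocks_zero, hatM1, hzero]

theorem hatS0_eq_fromBlocks {L R : List ℕ} (hL : ∀ i ∈ L, i ∈ Set.Ico 1 m)
    (hR : ∀ i ∈ R, i ∈ Set.Ico 1 m) :
    hatS0 m n r A B C D (L ++ 0 :: R) =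
      fromBlocks (hatM0 m n A (L ++ 0 :: R))
        (-((L.map (FM m n A)).prod * eB m n r m B))
        (-(eC m n r m C * (R.map (FM m n A)).prod)) (-D) := by
  have hmid : ∀ K : List ℕ, (∀ i ∈ K, i ∈ Set.Ico 1 m) →
      (K.map (SFM m n r A B C D)).prod = fromBlocks (K.map (FM m n A)).prod 0 0 1 := by
    intro K hK
    rw [List.map_congr_left fun i hi => SFM_of_mem_Ico (hK i hi), prod_map_fromBlocks_zero]
    simp
  rw [hatS0, hatM0, List.map_append, List.map_cons, List.prod_append, List.prod_cons,
    hmid L hL, hmid R hR, SFM, if_pos rfl, List.map_append, List.map_cons, List.prod_append,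
    List.prod_cons, fromBlocks_multiply, fromBlocks_multiply]
  simp

theorem SKP_eq_fromBlocks {L R w1 : List ℕ} (hL : ∀ i ∈ L, i ∈ Set.Ico 1 m)
    (hR : ∀ i ∈ R, i ∈ Set.Ico 1 m) (hw1 : ∀ i ∈ w1, i ∈ Set.Icc 1 m) (hm : m ∈ w1)
    (lam : ℂ) :
    SKP m n r A B C D (L ++ 0 :: R) w1 lam =
      fromBlocks (KP m n A (L ++ 0 :: R) w1 lam)
        ((L.map (FM m n A)).prod * eB m n r m B)
        (eC m n r m C * (R.map (FM m n A)).prod) D := by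
  rw [SKP, hatS1_eq_fromBlocks hw1 hm, hatS0_eq_fromBlocks hL hR, KP, fromBlocks_smul,
    sub_eq_add_neg, fromBlocks_neg, fromBlocks_add]
  simp [sub_eq_add_neg]

end SystemPencil

theorem blockBandS_one_fromBlocks_iff {m n r : ℕ}
    {K : Matrix (Fin m × Fin n) (Fin m × Fin n) ℂ} {U : Matrix (Fin m × Fin n) (Fin r) ℂ}
    {V : Matrix (Fin r) (Fin m × Fin n) ℂ}
    {W : Matrix (Fin r) (Fin r) ℂ} :
    BlockBandS m n r 1 (fromBlocks K U V W) ↔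
      BlockBandP m n 1 K ∧ (∀ p ∉ lastBlock m n, ∀ j, U p j = 0) ∧
        (∀ p ∉ lastBlock m n, ∀ j, V j p = 0) := by
  refine ⟨fun h => ⟨fun x y hxy => h (.inl x) (.inl y) hxy, fun p hp j => ?_,
    fun p hp j => ?_⟩, fun ⟨hK, hU, hV⟩ => ?_⟩
  · rw [mem_lastBlock] at hp
    exact h (.inl p) (.inr j) (.inl (by simp only [sIdx]; omega))
  · rw [mem_lastBlock] at hp
    exact h (.inr j) (.inl p) (.inr (by simp only [sIdx]; omega))
  · rintro (x | x) (y | y) hxy <;> simp only [sIdx] at hxy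
    · exact hK x y hxy
    · exact hU x (by rw [mem_lastBlock]; omega) y
    · exact hV y (by rw [mem_lastBlock]; omega) x
    · omega

theorem isCIP_zero_zero_iff {w : List ℕ} {c i : ℕ} (h0 : 0 ∈ w) (h : IsCIP w c i) :
    c = 0 ∧ i = 0 ↔ 1 ∉ w := by
  obtain ⟨⟨hc, hnc⟩, ⟨hi, hni⟩⟩ := h
  constructor
  · rintro ⟨rfl, rfl⟩ h1
    rcases lt_trichotomy (w.idxOf 0) (w.idxOf 1) with hlt | heq | hgt
    · exact hnc ⟨h0, h1, hlt⟩
    · exact zero_ne_one ((List.idxOf_inj h0).1 heq)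
    · exact hni ⟨h0, h1, hgt⟩
  · intro h1
    refine ⟨Nat.eq_zero_of_not_pos fun hpos => h1 (hc 0 hpos).2.1,
      Nat.eq_zero_of_not_pos fun hpos => h1 (hi 0 hpos).2.1⟩

namespace ProperPerm

variable {m : ℕ} {w0 w1 : List ℕ}

theorem nodup (hw : ProperPerm m w0 w1) : (w0 ++ w1).Nodup :=
  hw.1.nodup_iff.2 List.nodup_range

theorem lt_succ_of_mem (hw : ProperPerm m w0 w1) {i : ℕ} (hi : i ∈ w0 ++ w1) : i < m + 1 :=
  List.mem_range.1 (hw.1.subset hi)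

theorem mem_Icc_of_mem_right (hw : ProperPerm m w0 w1) {i : ℕ} (hi : i ∈ w1) :
    i ∈ Set.Icc 1 m := by
  have hi0 : i ≠ 0 := by
    rintro rfl
    exact List.disjoint_of_nodup_append hw.nodup hw.2.1 hi
  have := hw.lt_succ_of_mem (List.mem_append_right _ hi)
  exact ⟨by omega, by omega⟩

theorem mem_Ico_of_mem_left (hw : ProperPerm m w0 w1) {i : ℕ} (hi : i ∈ w0) (hi0 : i ≠ 0) :
    i ∈ Set.Ico 1 m := by
  have him : i ≠ m := by
    rintro rfl
    exact List.disjoint_of_nodup_append hw.nodup hi hw.2.2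
  have := hw.lt_succ_of_mem (List.mem_append_left _ hi)
  exact ⟨by omega, by omega⟩

theorem exists_eq_append_zero_cons (hw : ProperPerm m w0 w1) :
    ∃ L R : List ℕ, w0 = L ++ 0 :: R ∧ L.Nodup ∧ R.Nodup ∧
      (∀ i ∈ L, i ∈ Set.Ico 1 m) ∧ ∀ i ∈ R, i ∈ Set.Ico 1 m := by
  obtain ⟨L, R, rfl⟩ := List.append_of_mem hw.2.1
  obtain ⟨h0LR, hLR⟩ := List.nodup_cons.1 (List.nodup_middle.1 hw.nodup.of_append_left)
  have hbound : ∀ i ∈ L ++ R, i ∈ Set.Ico 1 m := fun i hi =>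
    hw.mem_Ico_of_mem_left (by simp only [List.mem_append, List.mem_cons] at hi ⊢; tauto)
      (by rintro rfl; exact h0LR hi)
  exact ⟨L, R, rfl, hLR.of_append_left, hLR.of_append_right,
    fun i hi => hbound i (List.mem_append_left _ hi),
    fun i hi => hbound i (List.mem_append_right _ hi)⟩

end ProperPerm

theorem stmt7_general (m n r : ℕ) (hm : 2 ≤ m)
    (A : Fin (m + 1) → Matrix (Fin n) (Fin n) ℂ)
    (B : Matrix (Fin n) (Fin r) ℂ) (C : Matrix (Fin r) (Fin n) ℂ)
    (D : Matrix (Fin r) (Fin r) ℂ) (hB : B ≠ 0) (hC : C ≠ 0)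
    (w0 w1 : List ℕ) (hw : ProperPerm m w0 w1)
    (c0 i0 : ℕ) (hcip : IsCIP w0 c0 i0) :
    ((∀ lam : ℂ, BlockBandS m n r 1 (SKP m n r A B C D w0 w1 lam)) ↔
      ((∀ lam : ℂ, BlockBandP m n 1 (KP m n A w0 w1 lam)) ∧ c0 = 0 ∧ i0 = 0)) ∧
    ((∀ lam : ℂ, BlockBandS m n r 1 (SKP m n r A B C D w0 w1 lam)) →
      ∀ lam : ℂ,
        SKP m n r A B C D w0 w1 lam =
          Matrix.fromBlocks (KP m n A w0 w1 lam) (eB m n r m B) (eC m n r m C) D) := by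
  have hcip' := isCIP_zero_zero_iff hw.2.1 hcip
  obtain ⟨L, R, rfl, hLnd, hRnd, hL, hR⟩ := hw.exists_eq_append_zero_cons
  have hSKP := SKP_eq_fromBlocks (A := A) (B := B) (C := C) (D := D) hL hR
    (fun i hi => hw.mem_Icc_of_mem_right hi) hw.2.2
  have hband : (∀ lam, BlockBandS m n r 1 (SKP m n r A B C D (L ++ 0 :: R) w1 lam)) ↔
      (∀ lam, BlockBandP m n 1 (KP m n A (L ++ 0 :: R) w1 lam)) ∧ 1 ∉ L ∧ 1 ∉ R := by
    simp only [hSKP, blockBandS_one_fromBlocks_iff,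
      prod_map_FM_mul_eB_apply_eq_zero_iff hm hB hL hLnd,
      eC_mul_prod_map_FM_apply_eq_zero_iff hm hC hR hRnd, forall_and, forall_const]
  have hone : 1 ∉ L ++ 0 :: R ↔ 1 ∉ L ∧ 1 ∉ R := by simp
  rw [hband, hcip', hone]
  refine ⟨Iff.rfl, fun ⟨_, h1L, h1R⟩ lam => ?_⟩
  rw [hSKP, prod_map_FM_mul_eB (forall_mem_Icc_two hL h1L),
    eC_mul_prod_map_FM (forall_mem_Icc_two hR h1R)]

/-- `𝕂_w(λ)` is block tridiagonal iff `K_w(λ)` is block tridiagonal and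
`CIP(w0) = (0, 0)`; in that case `𝕂_w(λ) = [[K_w(λ), e_m ⊗ B], [e_m^T ⊗ C, D]]`. -/
theorem stmt7 (m n r : ℕ) (hm : 2 ≤ m) (hn : 1 ≤ n) (hr : 1 ≤ r)
    (A : Fin (m + 1) → Matrix (Fin n) (Fin n) ℂ) (hreg : Regular m n A)
    (B : Matrix (Fin n) (Fin r) ℂ) (C : Matrix (Fin r) (Fin n) ℂ)
    (D : Matrix (Fin r) (Fin r) ℂ) (hB : B ≠ 0) (hC : C ≠ 0)
    (w0 w1 : List ℕ) (hw : ProperPerm m w0 w1)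
    (c0 i0 : ℕ) (hcip : IsCIP w0 c0 i0) :
    ((∀ lam : ℂ, BlockBandS m n r 1 (SKP m n r A B C D w0 w1 lam)) ↔
      ((∀ lam : ℂ, BlockBandP m n 1 (KP m n A w0 w1 lam)) ∧ c0 = 0 ∧ i0 = 0)) ∧
    ((∀ lam : ℂ, BlockBandS m n r 1 (SKP m n r A B C D w0 w1 lam)) →
      ∀ lam : ℂ,
        SKP m n r A B C D w0 w1 lam =
          Matrix.fromBlocks (KP m n A w0 w1 lam) (eB m n r m B) (eC m n r m C) D) :=
  stmt7_general m n r hm A B C D hB hC w0 w1 hw c0 i0 hcip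

end
end

section
/- Suppose m is odd and the transfer function G is Hermitian, i.e. every A_j is Hermitian, C = B^*, and D is Hermitian. Then the PGF pencil 𝕂(λ) = λ 𝕄_m 𝕄_{m−2}^{-1} ⋯ 𝕄_3^{-1} 𝕄_1^{-1} − 𝕄_0 𝕄_2 ⋯ 𝕄_{m−3} 𝕄_{m−1} of G is a Hermitian pencil; that is, both the matrix 𝕄_m 𝕄_{m−2}^{-1} ⋯ 𝕄_3^{-1} 𝕄_1^{-1} and the matrix 𝕄_0 𝕄_2 ⋯ 𝕄_{m−3} 𝕄_{m−1} are Hermitian. -/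
open Matrix
open Fin.NatCast

noncomputable section

/-! Each Fiedler matrix `𝕄_i` of a Hermitian system is Hermitian, hence so is `𝕄_i⁻¹`.
Away from its two active block indices `m - i - 1, m - i` (for `𝕄_0`: from `m - 1` and the
`r`-block; for `𝕄_m`: from `0` and the `r`-block) each `𝕄_i` is the identity, and two matrices
that are the identity on complementary index sets commute. Hence `𝕄_i, 𝕄_j` commute when
`|i - j| ≥ 2`, `𝕄_0` commutes with `𝕄_i` for `i ≥ 2` and `𝕄_m` with `𝕄_i` for `i ≤ m - 2`; for
odd `m` both coefficients of the pencil are therefore products of pairwise commuting Hermitian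
matrices. -/

namespace Matrix

variable {ι R : Type*} [Fintype ι] [DecidableEq ι] [CommRing R]

def IsIdOn (S : ι → Prop) (M : Matrix ι ι R) : Prop :=
  ∀ x y, S x ∨ S y → M x y = (1 : Matrix ι ι R) x y

theorem IsIdOn.sub_one_mul_sub_one {S T : ι → Prop} {M N : Matrix ι ι R}
    (hM : IsIdOn S M) (hN : IsIdOn T N) (hST : ∀ x, S x ∨ T x) :
    (M - 1) * (N - 1) = 0 := by
  ext x y
  rw [mul_apply, zero_apply]
  refine Finset.sum_eq_zero fun z _ => ?_
  rcases hST z with hz | hz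
  · rw [sub_apply, hM x z (Or.inr hz), sub_self, zero_mul]
  · rw [sub_apply (A := N), hN z y (Or.inl hz), sub_self, mul_zero]

theorem IsIdOn.commute {S T : ι → Prop} {M N : Matrix ι ι R}
    (hM : IsIdOn S M) (hN : IsIdOn T N) (hST : ∀ x, S x ∨ T x) : Commute M N := by
  have hMN := hM.sub_one_mul_sub_one hN hST
  have hNM := hN.sub_one_mul_sub_one hM fun x => (hST x).symm
  calc M * N = (M - 1) * (N - 1) + M + N - 1 := by noncomm_ring
    _ = (N - 1) * (M - 1) + M + N - 1 := by rw [hMN, hNM]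
    _ = N * M := by noncomm_ring

theorem commute_nonsing_inv_right {A B : Matrix ι ι R} (h : Commute A B) :
    Commute A B⁻¹ := by
  by_cases hB : IsUnit B.det
  · let _ := invertibleOfIsUnitDet B hB
    rw [← invOf_eq_nonsing_inv]
    exact h.invOf_right
  · rw [nonsing_inv_apply_not_isUnit B hB]
    exact Commute.zero_right A

theorem commute_nonsing_inv_nonsing_inv {A B : Matrix ι ι R} (h : Commute A B) :
    Commute A⁻¹ B⁻¹ :=
  commute_nonsing_inv_right (commute_nonsing_inv_right h.symm).symm

end Matrix

theorem isSelfAdjoint_list_prod {M : Type*} [Monoid M] [StarMul M] {l : List M}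
    (hl : ∀ x ∈ l, IsSelfAdjoint x) (hc : l.Pairwise Commute) : IsSelfAdjoint l.prod := by
  induction l with
  | nil => exact IsSelfAdjoint.one M
  | cons x l ih =>
    rw [List.forall_mem_cons] at hl
    rw [List.pairwise_cons] at hc
    rw [List.prod_cons]
    exact (hl.1.commute_iff (ih hl.2 hc.2)).mp (Commute.list_prod_right _ _ hc.1)

section Fiedler

variable {m n r i : ℕ} {A : Fin (m + 1) → Matrix (Fin n) (Fin n) ℂ}
  {B : Matrix (Fin n) (Fin r) ℂ} {C : Matrix (Fin r) (Fin n) ℂ} {D : Matrix (Fin r) (Fin r) ℂ}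

theorem FM_isHermitian (hA : ∀ j, (A j).IsHermitian) (hi : i ≤ m) :
    (FM m n A i).IsHermitian := by
  ext ⟨b, k⟩ ⟨c, l⟩
  rw [conjTranspose_apply]
  by_cases h0 : i = 0
  · simp only [FM, of_apply, h0, if_true]
    split_ifs <;> simp_all [(hA 0).apply, one_apply, eq_comm]
  by_cases hm : i = m
  · simp only [FM, of_apply, hm, if_true]
    split_ifs <;> simp_all [(hA _).apply, one_apply, eq_comm]
  simp only [FM, of_apply, h0, hm, if_false]
  have hblock : ∀ x : Fin m, (x : ℕ) = m - i - 1 ∨ (x : ℕ) = m - i ∨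
      ((x : ℕ) ≠ m - i - 1 ∧ (x : ℕ) ≠ m - i) := by omega
  have hj : m - i ≠ m - i - 1 := by omega
  rcases hblock b with hb | hb | hb <;> rcases hblock c with hc | hc | hc <;>
    simp [hb, hc, hj, (hA _).apply, one_apply, eq_comm] <;>
    split_ifs <;> simp [one_apply, eq_comm]

theorem eB_conjTranspose (j : ℕ) : (eB m n r j B)ᴴ = eC m n r j Bᴴ := by
  ext q p
  simp only [eB, eC, conjTranspose_apply, of_apply, apply_ite star, star_zero]

theorem SFM_isHermitian (hA : ∀ j, (A j).IsHermitian) (hD : D.IsHermitian) (hi : i ≤ m) :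
    (SFM m n r A B Bᴴ D i).IsHermitian := by
  unfold SFM
  split_ifs with h0 hm
  · subst h0
    refine (FM_isHermitian hA hi).fromBlocks ?_ hD.neg
    rw [conjTranspose_neg, eB_conjTranspose]
  · subst hm
    exact (FM_isHermitian hA hi).fromBlocks conjTranspose_zero isHermitian_zero
  · exact (FM_isHermitian hA hi).fromBlocks conjTranspose_zero isHermitian_one

theorem SFM_zero_isIdOn : IsIdOn (fun x => sIdx m n r x < m - 1) (SFM m n r A B C D 0) := by
  rintro (⟨b, k⟩ | c) (⟨b', k'⟩ | c') h <;>
    simp_all [SFM, FM, sIdx, eB, eC, one_apply]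
  all_goals first | omega | (split_ifs <;> simp_all [one_apply, Fin.ext_iff])

theorem SFM_self_isIdOn (hm : m ≠ 0) :
    IsIdOn (fun x => 0 < sIdx m n r x ∧ sIdx m n r x < m) (SFM m n r A B C D m) := by
  rintro (⟨b, k⟩ | c) (⟨b', k'⟩ | c') h <;>
    simp_all [SFM, FM, sIdx, one_apply]
  all_goals first | omega | (split_ifs <;> simp_all [one_apply, Fin.ext_iff])

theorem SFM_isIdOn (h0 : i ≠ 0) (hm : i ≠ m) :
    IsIdOn (fun x => sIdx m n r x ≠ m - i - 1 ∧ sIdx m n r x ≠ m - i) (SFM m n r A B C D i) := by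
  rintro (⟨b, k⟩ | c) (⟨b', k'⟩ | c') h <;>
    simp_all [SFM, FM, sIdx, one_apply]
  all_goals first | omega | (split_ifs <;> simp_all [one_apply, Fin.ext_iff])

theorem SFM_commute_SFM {a b : ℕ} (ha : a ≠ 0) (hb : b ≠ 0) (ham : a < m) (hbm : b < m)
    (hab : a + 2 ≤ b ∨ b + 2 ≤ a) : Commute (SFM m n r A B C D a) (SFM m n r A B C D b) :=
  (SFM_isIdOn ha ham.ne).commute (SFM_isIdOn hb hbm.ne) fun _ => by omega

theorem SFM_zero_commute (hi : 2 ≤ i) (him : i < m) :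
    Commute (SFM m n r A B C D 0) (SFM m n r A B C D i) :=
  SFM_zero_isIdOn.commute (SFM_isIdOn (by omega) him.ne) fun _ => by omega

theorem SFM_self_commute (hi : i ≠ 0) (him : i + 2 ≤ m) :
    Commute (SFM m n r A B C D m) (SFM m n r A B C D i) :=
  (SFM_self_isIdOn (by omega)).commute (SFM_isIdOn hi (by omega)) fun _ => by omega

theorem SFM_self_mul_prod_inv_odd_isHermitian (hA : ∀ j, (A j).IsHermitian)
    (hD : D.IsHermitian) (hodd : m % 2 = 1) :
    (SFM m n r A B Bᴴ D m *
        ((((List.range m).filter fun i => i % 2 == 1).reverse.map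
          fun i => (SFM m n r A B Bᴴ D i)⁻¹).prod)).IsHermitian := by
  have hmem : ∀ i ∈ ((List.range m).filter fun i => i % 2 == 1).reverse,
      i < m ∧ i % 2 = 1 := by simp
  rw [← List.prod_cons]
  refine isSelfAdjoint_list_prod ?_ ?_
  · rw [List.forall_mem_cons, List.forall_mem_map]
    exact ⟨SFM_isHermitian hA hD le_rfl, fun i hi => (SFM_isHermitian hA hD (hmem i hi).1.le).inv⟩
  · rw [List.pairwise_cons, List.pairwise_map, List.forall_mem_map]
    have hnodup : ((List.range m).filter fun i => i % 2 == 1).reverse.Nodup :=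
      List.nodup_reverse.2 (List.nodup_range.filter _)
    refine ⟨fun i hi => ?_, hnodup.pairwise_of_forall_ne fun a ha b hb hab => ?_⟩
    · obtain ⟨him, hiodd⟩ := hmem i hi
      exact commute_nonsing_inv_right (SFM_self_commute (by omega) (by omega))
    · obtain ⟨ham, haodd⟩ := hmem a ha
      obtain ⟨hbm, hbodd⟩ := hmem b hb
      exact commute_nonsing_inv_nonsing_inv
        (SFM_commute_SFM (by omega) (by omega) (by omega) (by omega) (by omega))

theorem SFM_zero_mul_prod_even_isHermitian (hA : ∀ j, (A j).IsHermitian)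
    (hD : D.IsHermitian) :
    (SFM m n r A B Bᴴ D 0 *
        (((List.range m).filter fun i => (i % 2 == 0) && (i != 0)).map
          (SFM m n r A B Bᴴ D)).prod).IsHermitian := by
  have hmem : ∀ i ∈ (List.range m).filter (fun i => (i % 2 == 0) && (i != 0)),
      i < m ∧ i % 2 = 0 ∧ i ≠ 0 := by simp
  rw [← List.prod_cons]
  refine isSelfAdjoint_list_prod ?_ ?_
  · rw [List.forall_mem_cons, List.forall_mem_map]
    exact ⟨SFM_isHermitian hA hD (Nat.zero_le m),
      fun i hi => SFM_isHermitian hA hD (hmem i hi).1.le⟩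
  · rw [List.pairwise_cons, List.pairwise_map, List.forall_mem_map]
    refine ⟨fun i hi => ?_, (List.nodup_range.filter _).pairwise_of_forall_ne
      fun a ha b hb hab => ?_⟩
    · obtain ⟨him, hieven, hi0⟩ := hmem i hi
      exact SFM_zero_commute (by omega) (by omega)
    · obtain ⟨ham, haeven, ha0⟩ := hmem a ha
      obtain ⟨hbm, hbeven, hb0⟩ := hmem b hb
      exact SFM_commute_SFM (by omega) (by omega) (by omega) (by omega) (by omega)

end Fiedler

theorem stmt10_general (m n r : ℕ) (hodd : m % 2 = 1)
    (A : Fin (m + 1) → Matrix (Fin n) (Fin n) ℂ)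
    (B : Matrix (Fin n) (Fin r) ℂ) (C : Matrix (Fin r) (Fin n) ℂ)
    (D : Matrix (Fin r) (Fin r) ℂ)
    (hA : ∀ j, (A j).IsHermitian) (hC : C = Bᴴ) (hD : D.IsHermitian) :
    (SFM m n r A B C D m *
        ((((List.range m).filter fun i => i % 2 == 1).reverse.map
          fun i => (SFM m n r A B C D i)⁻¹).prod)).IsHermitian ∧
    (SFM m n r A B C D 0 *
        (((List.range m).filter fun i => (i % 2 == 0) && (i != 0)).map
          (SFM m n r A B C D)).prod).IsHermitian := by
  subst hC
  exact ⟨SFM_self_mul_prod_inv_odd_isHermitian hA hD hodd,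
    SFM_zero_mul_prod_even_isHermitian hA hD⟩

/-- if `m` is odd and `G` is Hermitian, then the PGF pencil
`𝕂(λ) = λ 𝕄_m 𝕄_{m−2}⁻¹ ⋯ 𝕄_3⁻¹ 𝕄_1⁻¹ − 𝕄_0 𝕄_2 ⋯ 𝕄_{m−3} 𝕄_{m−1}` of `G` is
a Hermitian pencil. -/
theorem stmt10 (m n r : ℕ) (hm : 2 ≤ m) (hn : 1 ≤ n) (hr : 1 ≤ r) (hodd : m % 2 = 1)
    (A : Fin (m + 1) → Matrix (Fin n) (Fin n) ℂ) (hreg : Regular m n A)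
    (B : Matrix (Fin n) (Fin r) ℂ) (C : Matrix (Fin r) (Fin n) ℂ)
    (D : Matrix (Fin r) (Fin r) ℂ)
    (hA : ∀ j, (A j).IsHermitian) (hC : C = Bᴴ) (hD : D.IsHermitian) :
    (SFM m n r A B C D m *
        ((((List.range m).filter fun i => i % 2 == 1).reverse.map
          fun i => (SFM m n r A B C D i)⁻¹).prod)).IsHermitian ∧
    (SFM m n r A B C D 0 *
        (((List.range m).filter fun i => (i % 2 == 0) && (i != 0)).map
          (SFM m n r A B C D)).prod).IsHermitian :=
  stmt10_general m n r hodd A B C D hA hC hD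

end
end
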